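/- arXiv:2603.19871 — 13 statements merged into one kernel-verified Lean document; each statement's English description precedes it below -/
import Mathlib

section
/- Let u₁, …, uₙ be pairwise distinct complex numbers such that arg(u_a − u_b) ∈ (−π/2, π/2] for all pairs a < b. Then there exists an index j, 1 ≤ j ≤ n−1, such that arg(u_j − u_{j+1}) = max over all pairs a < b of arg(u_a − u_b). -/
open Complex Real

lemma im_exp_neg_theta_mul (θ : ℝ) (z : ℂ) (hz : z ≠ 0) :
    (Complex.exp (-(θ:ℂ) * Complex.I) * z).im = ‖z‖ * Real.sin (z.arg - θ) := by
  conv_lhs => rw [← Complex.norm_mul_exp_arg_mul_I z]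
  rw [show Complex.exp (-(θ:ℂ) * Complex.I) * (((‖z‖ : ℝ) : ℂ) * Complex.exp (z.arg * Complex.I))
      = ((‖z‖ : ℝ) : ℂ) * Complex.exp (((z.arg - θ : ℝ) : ℂ) * Complex.I) by
    rw [mul_left_comm, ← Complex.exp_add]; push_cast; ring_nf]
  rw [Complex.mul_im, Complex.ofReal_im, Complex.ofReal_re, Complex.exp_ofReal_mul_I_im]
  ring

/-- If `u 0, …, u (n-1)` are pairwise distinct complex numbers with
`arg (u a - u b) ∈ (-π/2, π/2]` for all `a < b`, then the maximum of
`arg (u a - u b)` over pairs `a < b` is attained at a consecutive pair `(j, j+1)`. -/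
theorem exists_consecutive_pair_attaining_max_arg
    (n : ℕ) (hn : 2 ≤ n) (u : Fin n → ℂ)
    (hdist : Function.Injective u)
    (harg : ∀ a b : Fin n, a < b → (u a - u b).arg ∈ Set.Ioc (-(π / 2)) (π / 2)) :
    ∃ j : Fin n, ∃ h : (j : ℕ) + 1 < n,
      ∀ a b : Fin n, a < b →
        (u a - u b).arg ≤ (u j - u ⟨(j : ℕ) + 1, h⟩).arg := by
  -- function giving arg of consecutive difference
  set g : ℕ → ℝ := fun k =>
    if h : k + 1 < n then (u ⟨k, by omega⟩ - u ⟨k + 1, h⟩).arg else 0 with hg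
  obtain ⟨j, hjmem, hjmax⟩ :=
    Finset.exists_max_image (Finset.range (n - 1)) g ⟨0, by simp; omega⟩
  rw [Finset.mem_range] at hjmem
  have hj1 : j + 1 < n := by omega
  refine ⟨⟨j, by omega⟩, hj1, ?_⟩
  intro a b hab
  set θ : ℝ := (u ⟨j, by omega⟩ - u ⟨j + 1, hj1⟩).arg with hθ
  have hθg : g j = θ := by simp [hg, hj1, hθ]
  -- θ bounds
  have hθIoc := harg ⟨j, by omega⟩ ⟨j + 1, hj1⟩ (by simp [Fin.lt_def])
  -- every consecutive arg is ≤ θ and > -π/2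
  have hcons : ∀ k (hk : k + 1 < n),
      (u ⟨k, by omega⟩ - u ⟨k + 1, hk⟩).arg ≤ θ ∧
      -(π / 2) < (u ⟨k, by omega⟩ - u ⟨k + 1, hk⟩).arg ∧
      u ⟨k, by omega⟩ - u ⟨k + 1, hk⟩ ≠ 0 := by
    intro k hk
    have h1 := hjmax k (Finset.mem_range.mpr (by omega))
    have h2 := harg ⟨k, by omega⟩ ⟨k + 1, hk⟩ (by simp [Fin.lt_def])
    refine ⟨?_, h2.1, ?_⟩
    · rw [← hθg]
      simpa [hg, hk, hj1] using h1
    · intro h0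
      have := hdist (sub_eq_zero.mp h0)
      simp [Fin.ext_iff] at this
  -- telescoping: u a - u b as a sum of consecutive differences
  set F : ℕ → ℂ := fun k => if h : k < n then u ⟨k, h⟩ else 0 with hF
  have htel : u a - u b = ∑ k ∈ Finset.Ico (a : ℕ) (b : ℕ),
      (F k - F (k + 1)) := by
    have : ∑ k ∈ Finset.Ico (a : ℕ) (b : ℕ), ((-F) (k + 1) - (-F) k)
        = (-F) (b : ℕ) - (-F) (a : ℕ) := by
      rw [Finset.sum_Ico_eq_sub _ (le_of_lt hab), Finset.sum_range_sub, Finset.sum_range_sub]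
      simp only [Pi.neg_apply]; ring
    simp only [Pi.neg_apply] at this
    have hFa : F (a : ℕ) = u a := by simp [hF, a.isLt]
    have hFb : F (b : ℕ) = u b := by simp [hF, b.isLt]
    calc u a - u b = -F (b:ℕ) - -F (a:ℕ) := by
          rw [hFa, hFb]; ring
      _ = ∑ k ∈ Finset.Ico (a : ℕ) (b : ℕ), (F k - F (k + 1)) := by
          rw [← this]; apply Finset.sum_congr rfl; intro k _; ring
  -- Im of rotated sum is ≤ 0
  have hsum : (Complex.exp (-(θ:ℂ) * Complex.I) * (u a - u b)).im ≤ 0 := by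
    rw [htel, Finset.mul_sum]
    rw [Complex.im_sum]
    apply Finset.sum_nonpos
    intro k hk
    rw [Finset.mem_Ico] at hk
    have hk1 : k + 1 < n := by have := b.isLt; omega
    have hFk : F k - F (k + 1) = u ⟨k, by omega⟩ - u ⟨k + 1, hk1⟩ := by
      simp [hF, hk1, Nat.lt_of_succ_lt hk1]
    rw [hFk]
    obtain ⟨hle, hgt, hne⟩ := hcons k hk1
    rw [im_exp_neg_theta_mul _ _ hne]
    apply mul_nonpos_of_nonneg_of_nonpos (norm_nonneg _)
    apply Real.sin_nonpos_of_nonpos_of_neg_pi_le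
    · linarith
    · have := Real.pi_pos
      have h1 : -(π/2) < (u ⟨k, by omega⟩ - u ⟨k + 1, hk1⟩).arg := hgt
      have h2 : θ ≤ π / 2 := hθIoc.2
      linarith
  -- conclude
  by_contra hlt
  push_neg at hlt
  have hneS : u a - u b ≠ 0 := by
    intro h0
    have := hdist (sub_eq_zero.mp h0)
    exact absurd this (Fin.ne_of_lt hab)
  have hSIoc := harg a b hab
  have him : (Complex.exp (-(θ:ℂ) * Complex.I) * (u a - u b)).im
      = ‖u a - u b‖ * Real.sin ((u a - u b).arg - θ) :=
    im_exp_neg_theta_mul _ _ hneS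
  have hpos : 0 < Real.sin ((u a - u b).arg - θ) := by
    apply Real.sin_pos_of_pos_of_lt_pi
    · linarith
    · have h2 : (u a - u b).arg ≤ π / 2 := hSIoc.2
      have h3 : -(π/2) < θ := hθIoc.1
      linarith
  have habs : 0 < ‖u a - u b‖ := by
    simpa [norm_pos_iff] using hneS
  nlinarith [hsum, him]
end

section
/- Let n ≥ 2, let S be an n×n real upper unitriangular matrix (upper triangular with all diagonal entries 1), and let 1 ≤ l ≤ n−1. Define B_l(S) as the n×n matrix equal to the identity except that the 2×2 block in rows and columns l, l+1 equals [[0, 1], [1, −S_{l,l+1}]], and set σ_l(S) = B_l(S)·S·B_l(S). Then σ_l(S) is again upper unitriangular, and its (l, l+1)-entry equals −S_{l,l+1}. -/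
open Matrix

/-- `Bl n l h S` is the matrix equal to the identity except that the 2×2 block in
rows/columns `l, l+1` is `[[0, 1], [1, -S l (l+1)]]`. -/
def Bl (n : ℕ) (l : Fin n) (h : (l : ℕ) + 1 < n) (S : Matrix (Fin n) (Fin n) ℝ) :
    Matrix (Fin n) (Fin n) ℝ :=
  fun i j =>
    if i = l ∧ j = l then 0
    else if i = l ∧ j = ⟨(l : ℕ) + 1, h⟩ then 1
    else if i = (⟨(l : ℕ) + 1, h⟩ : Fin n) ∧ j = l then 1
    else if i = (⟨(l : ℕ) + 1, h⟩ : Fin n) ∧ j = ⟨(l : ℕ) + 1, h⟩ then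
      -S l ⟨(l : ℕ) + 1, h⟩
    else if i = j then 1 else 0

/-- The braid-type action `σ_l (S) = B_l(S) * S * B_l(S)`. -/
def sigmal (n : ℕ) (l : Fin n) (h : (l : ℕ) + 1 < n)
    (S : Matrix (Fin n) (Fin n) ℝ) : Matrix (Fin n) (Fin n) ℝ :=
  Bl n l h S * S * Bl n l h S

section aux

variable (n : ℕ) (l : Fin n) (h : (l : ℕ) + 1 < n) (S : Matrix (Fin n) (Fin n) ℝ)

lemma Bl_hne : l ≠ (⟨(l : ℕ) + 1, h⟩ : Fin n) := by simp [Fin.ext_iff]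

lemma Bl_mul_apply (M : Matrix (Fin n) (Fin n) ℝ) (i j : Fin n) :
    (Bl n l h S * M) i j =
      if i = l then M ⟨(l : ℕ) + 1, h⟩ j
      else if i = (⟨(l : ℕ) + 1, h⟩ : Fin n) then
        M l j - S l ⟨(l : ℕ) + 1, h⟩ * M ⟨(l : ℕ) + 1, h⟩ j
      else M i j := by
  have hne := Bl_hne n l h
  rw [mul_apply]
  by_cases hi : i = l
  · rw [if_pos hi]
    have key : ∀ k, Bl n l h S i k * M k j =
        if k = (⟨(l : ℕ) + 1, h⟩ : Fin n) then M k j else 0 := by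
      intro k
      simp only [Bl]
      split_ifs with h1 h2 h3 h4 h5 <;> first | (exfalso; simp only [Fin.ext_iff, Fin.val_mk, not_and] at *; omega) | rfl | exact one_mul _ | exact zero_mul _ | ring | (exfalso; simp only [Fin.ext_iff, Fin.val_mk, not_and] at *; omega)
    rw [Finset.sum_congr rfl fun k _ => key k, Finset.sum_ite_eq' Finset.univ]
    simp
  · rw [if_neg hi]
    by_cases hi2 : i = (⟨(l : ℕ) + 1, h⟩ : Fin n)
    · rw [if_pos hi2]
      have key : ∀ k, Bl n l h S i k * M k j =
          (if k = l then M k j else 0) +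
            (if k = (⟨(l : ℕ) + 1, h⟩ : Fin n) then -S l ⟨(l : ℕ) + 1, h⟩ * M k j else 0) := by
        intro k
        simp only [Bl]
        split_ifs with h1 h2 h3 h4 h5 <;> first | (exfalso; simp only [Fin.ext_iff, Fin.val_mk, not_and] at *; omega) | rfl | exact one_mul _ | exact zero_mul _ | ring | (exfalso; simp only [Fin.ext_iff, Fin.val_mk, not_and] at *; omega)
      rw [Finset.sum_congr rfl fun k _ => key k, Finset.sum_add_distrib,
        Finset.sum_ite_eq' Finset.univ, Finset.sum_ite_eq' Finset.univ]
      simp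
      ring
    · rw [if_neg hi2]
      have key : ∀ k, Bl n l h S i k * M k j = if k = i then M k j else 0 := by
        intro k
        simp only [Bl]
        split_ifs with h1 h2 h3 h4 h5 <;> first | (exfalso; simp only [Fin.ext_iff, Fin.val_mk, not_and] at *; omega) | rfl | exact one_mul _ | exact zero_mul _ | ring | (exfalso; simp only [Fin.ext_iff, Fin.val_mk, not_and] at *; omega)
      rw [Finset.sum_congr rfl fun k _ => key k, Finset.sum_ite_eq' Finset.univ]
      simp

lemma mul_Bl_apply (M : Matrix (Fin n) (Fin n) ℝ) (i j : Fin n) :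
    (M * Bl n l h S) i j =
      if j = l then M i ⟨(l : ℕ) + 1, h⟩
      else if j = (⟨(l : ℕ) + 1, h⟩ : Fin n) then
        M i l - M i ⟨(l : ℕ) + 1, h⟩ * S l ⟨(l : ℕ) + 1, h⟩
      else M i j := by
  have hne := Bl_hne n l h
  rw [mul_apply]
  by_cases hj : j = l
  · rw [if_pos hj]
    have key : ∀ k, M i k * Bl n l h S k j =
        if k = (⟨(l : ℕ) + 1, h⟩ : Fin n) then M i k else 0 := by
      intro k
      simp only [Bl]
      split_ifs with h1 h2 h3 h4 h5 <;>
        first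
          | (exfalso; simp only [Fin.ext_iff, Fin.val_mk, not_and] at *; omega)
          | rfl
          | exact mul_one _
          | exact mul_zero _
          | ring
    rw [Finset.sum_congr rfl fun k _ => key k, Finset.sum_ite_eq' Finset.univ]
    simp
  · rw [if_neg hj]
    by_cases hj2 : j = (⟨(l : ℕ) + 1, h⟩ : Fin n)
    · rw [if_pos hj2]
      have key : ∀ k, M i k * Bl n l h S k j =
          (if k = l then M i k else 0) +
            (if k = (⟨(l : ℕ) + 1, h⟩ : Fin n) then M i k * -S l ⟨(l : ℕ) + 1, h⟩ else 0) := by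
        intro k
        simp only [Bl]
        split_ifs with h1 h2 h3 h4 h5 <;>
          first
            | (exfalso; simp only [Fin.ext_iff, Fin.val_mk, not_and] at *; omega)
            | rfl
            | exact mul_one _
            | exact mul_zero _
            | ring
      rw [Finset.sum_congr rfl fun k _ => key k, Finset.sum_add_distrib,
        Finset.sum_ite_eq' Finset.univ, Finset.sum_ite_eq' Finset.univ]
      simp
      ring
    · rw [if_neg hj2]
      have key : ∀ k, M i k * Bl n l h S k j = if k = j then M i k else 0 := by
        intro k
        simp only [Bl]
        split_ifs with h1 h2 h3 h4 h5 <;>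
          first
            | (exfalso; simp only [Fin.ext_iff, Fin.val_mk, not_and] at *; omega)
            | rfl
            | exact mul_one _
            | exact mul_zero _
            | ring
      rw [Finset.sum_congr rfl fun k _ => key k, Finset.sum_ite_eq' Finset.univ]
      simp

end aux

/-- If `S` is real upper unitriangular then `σ_l(S)` is again upper
unitriangular, and its `(l, l+1)` entry is `-S l (l+1)`. -/
theorem sigmal_upper_unitriangular
    (n : ℕ) (hn : 2 ≤ n) (S : Matrix (Fin n) (Fin n) ℝ)
    (htri : S.BlockTriangular id) (hdiag : ∀ i, S i i = 1)
    (l : Fin n) (h : (l : ℕ) + 1 < n) :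
    (sigmal n l h S).BlockTriangular id ∧ (∀ i, sigmal n l h S i i = 1) ∧
      sigmal n l h S l ⟨(l : ℕ) + 1, h⟩ = -S l ⟨(l : ℕ) + 1, h⟩ := by
  have htri' : ∀ i j : Fin n, (j : ℕ) < (i : ℕ) → S i j = 0 := fun i j hij =>
    htri (show (id j : Fin n) < id i from hij)
  have hne := Bl_hne n l h
  have hl1l : S (⟨(l : ℕ) + 1, h⟩ : Fin n) l = 0 := htri' _ _ (by simp)
  have key : ∀ i j, sigmal n l h S i j =
      if j = l then
        (if i = l then S ⟨(l : ℕ) + 1, h⟩ ⟨(l : ℕ) + 1, h⟩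
         else if i = (⟨(l : ℕ) + 1, h⟩ : Fin n) then
           S l ⟨(l : ℕ) + 1, h⟩ - S l ⟨(l : ℕ) + 1, h⟩ * S ⟨(l : ℕ) + 1, h⟩ ⟨(l : ℕ) + 1, h⟩
         else S i ⟨(l : ℕ) + 1, h⟩)
      else if j = (⟨(l : ℕ) + 1, h⟩ : Fin n) then
        (if i = l then S ⟨(l : ℕ) + 1, h⟩ l
         else if i = (⟨(l : ℕ) + 1, h⟩ : Fin n) then
           S l l - S l ⟨(l : ℕ) + 1, h⟩ * S ⟨(l : ℕ) + 1, h⟩ l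
         else S i l) -
        (if i = l then S ⟨(l : ℕ) + 1, h⟩ ⟨(l : ℕ) + 1, h⟩
         else if i = (⟨(l : ℕ) + 1, h⟩ : Fin n) then
           S l ⟨(l : ℕ) + 1, h⟩ - S l ⟨(l : ℕ) + 1, h⟩ * S ⟨(l : ℕ) + 1, h⟩ ⟨(l : ℕ) + 1, h⟩
         else S i ⟨(l : ℕ) + 1, h⟩) * S l ⟨(l : ℕ) + 1, h⟩
      else
        (if i = l then S ⟨(l : ℕ) + 1, h⟩ j
         else if i = (⟨(l : ℕ) + 1, h⟩ : Fin n) then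
           S l j - S l ⟨(l : ℕ) + 1, h⟩ * S ⟨(l : ℕ) + 1, h⟩ j
         else S i j) := by
    intro i j
    rw [sigmal, mul_Bl_apply, Bl_mul_apply, Bl_mul_apply, Bl_mul_apply]
  refine ⟨?_, ?_, ?_⟩
  · intro i j hij
    have hij' : (j : ℕ) < (i : ℕ) := hij
    rw [key]
    by_cases hj : j = l
    · simp only [if_pos hj]
      by_cases hi : i = l
      · exfalso; rw [hi, hj] at hij'; omega
      · simp only [if_neg hi]
        by_cases hi2 : i = (⟨(l : ℕ) + 1, h⟩ : Fin n)
        · simp only [if_pos hi2]; rw [hdiag]; ring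
        · simp only [if_neg hi2]
          refine htri' _ _ ?_
          have h1 : (l : ℕ) < (i : ℕ) := by rw [hj] at hij'; exact hij'
          have h2 : (i : ℕ) ≠ (l : ℕ) + 1 := fun hc => hi2 (Fin.ext hc)
          simp only [Fin.val_mk]; omega
    · simp only [if_neg hj]
      by_cases hj2 : j = (⟨(l : ℕ) + 1, h⟩ : Fin n)
      · simp only [if_pos hj2]
        have hji : (l : ℕ) + 1 < (i : ℕ) := by rw [hj2] at hij'; simpa using hij'
        by_cases hi : i = l
        · exfalso; rw [hi] at hji; omega
        · simp only [if_neg hi]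
          by_cases hi2 : i = (⟨(l : ℕ) + 1, h⟩ : Fin n)
          · exfalso; rw [hi2] at hji; simp at hji
          · simp only [if_neg hi2]
            rw [htri' i l (by omega), htri' i _ (show ((⟨(l : ℕ) + 1, h⟩ : Fin n) : ℕ) < (i : ℕ) by simpa using hji)]
            ring
      · simp only [if_neg hj2]
        have hjl : (j : ℕ) ≠ (l : ℕ) := fun hc => hj (Fin.ext hc)
        have hjl1 : (j : ℕ) ≠ (l : ℕ) + 1 := fun hc => hj2 (Fin.ext (by simpa using hc))
        by_cases hi : i = l
        · simp only [if_pos hi]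
          refine htri' _ _ ?_
          have : (j : ℕ) < (l : ℕ) := by rw [hi] at hij'; omega
          simp only [Fin.val_mk]; omega
        · simp only [if_neg hi]
          by_cases hi2 : i = (⟨(l : ℕ) + 1, h⟩ : Fin n)
          · have hjlt : (j : ℕ) < (l : ℕ) := by
              rw [hi2] at hij'; simp only [Fin.val_mk] at hij'; omega
            simp only [if_pos hi2]
            rw [htri' l j hjlt, htri' _ j (show (j : ℕ) < ((⟨(l : ℕ) + 1, h⟩ : Fin n) : ℕ) by simp only [Fin.val_mk]; omega)]
            ring
          · simp only [if_neg hi2]; exact htri' _ _ hij'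
  · intro i
    rw [key]
    by_cases hi : i = l
    · simp only [if_pos hi]; exact hdiag _
    · simp only [if_neg hi]
      by_cases hi2 : i = (⟨(l : ℕ) + 1, h⟩ : Fin n)
      · simp only [if_pos hi2]
        rw [hdiag, hdiag, hl1l]
        ring
      · simp only [if_neg hi2]; exact hdiag i
  · rw [key, if_neg (Ne.symm hne), if_pos rfl, if_pos rfl, hl1l, hdiag]
    simp
end

section
/- Let n ≥ 2, let S be an n×n real upper unitriangular matrix, let 1 ≤ l ≤ n−1, and let ε = diag(ε₁, …, εₙ) with εⱼ ∈ {±1}. Let P_l be the permutation matrix of the transposition exchanging l and l+1, and set ε' = P_l ε P_l (i.e. ε with the entries ε_l and ε_{l+1} exchanged). Then σ_l(ε S ε) = ε'·σ_l(S)·ε', where σ_l(T) = B_l(T)·T·B_l(T) and B_l(T) is the matrix equal to the identity except for the 2×2 block in rows/columns l, l+1 given by [[0,1],[1,−T_{l,l+1}]]. -/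
open Matrix

/-- For `S` real upper unitriangular and `ε` a diagonal matrix of
signs, `σ_l (ε S ε) = ε' σ_l(S) ε'` where `ε' = P_l ε P_l` has the entries
`ε l` and `ε (l+1)` exchanged. -/
theorem sigmal_comm_sign_conjugation
    (n : ℕ) (hn : 2 ≤ n) (S : Matrix (Fin n) (Fin n) ℝ)
    (htri : S.BlockTriangular id) (hdiag : ∀ i, S i i = 1)
    (l : Fin n) (h : (l : ℕ) + 1 < n)
    (ε : Fin n → ℝ) (hε : ∀ j, ε j = 1 ∨ ε j = -1) :
    sigmal n l h (Matrix.diagonal ε * S * Matrix.diagonal ε) =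
      Matrix.diagonal (fun i => ε (Equiv.swap l ⟨(l : ℕ) + 1, h⟩ i)) *
        sigmal n l h S *
        Matrix.diagonal (fun i => ε (Equiv.swap l ⟨(l : ℕ) + 1, h⟩ i)) := by
  have hsq : ∀ j, ε j * ε j = 1 := fun j => by
    rcases hε j with h1 | h1 <;> rw [h1] <;> norm_num
  have hne : l ≠ (⟨(l : ℕ) + 1, h⟩ : Fin n) := by simp [Fin.ext_iff]
  have hsw : ∀ i, ε (Equiv.swap l (⟨(l : ℕ) + 1, h⟩ : Fin n) i) =
      if i = l then ε ⟨(l : ℕ) + 1, h⟩ else if i = (⟨(l : ℕ) + 1, h⟩ : Fin n) then ε l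
      else ε i := by
    intro i
    by_cases h1 : i = l
    · simp [h1, hne.symm]
    · by_cases h2 : i = (⟨(l : ℕ) + 1, h⟩ : Fin n) <;>
        simp [h1, h2, hne.symm, Equiv.swap_apply_of_ne_of_ne]
  set D' : Matrix (Fin n) (Fin n) ℝ :=
    Matrix.diagonal (fun i => ε (Equiv.swap l ⟨(l : ℕ) + 1, h⟩ i)) with hD'
  have lem1 : Bl n l h (Matrix.diagonal ε * S * Matrix.diagonal ε) =
      D' * Bl n l h S * Matrix.diagonal ε := by
    ext i j
    simp only [hD', Bl, Matrix.mul_diagonal, Matrix.diagonal_mul, hsw]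
    split_ifs <;> simp_all
  have lem2 : Matrix.diagonal ε * (D' * (Bl n l h S * Matrix.diagonal ε)) =
      Bl n l h S * D' := by
    ext i j
    simp only [hD', Bl, Matrix.mul_diagonal, Matrix.diagonal_mul, hsw]
    split_ifs <;> simp_all <;> ring_nf <;> simp [pow_two, hsq]
  have hDD : Matrix.diagonal ε * Matrix.diagonal ε = (1 : Matrix (Fin n) (Fin n) ℝ) := by
    rw [Matrix.diagonal_mul_diagonal]
    rw [show (fun i => ε i * ε i) = fun _ => (1 : ℝ) from funext fun j => hsq j]
    exact Matrix.diagonal_one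
  unfold sigmal
  rw [lem1]
  simp only [Matrix.mul_assoc]
  rw [← Matrix.mul_assoc (Matrix.diagonal ε) (Matrix.diagonal ε), hDD, Matrix.one_mul]
  rw [lem2]
end

section
/- Let n ≥ 2, let S be an n×n real upper unitriangular matrix, and let 1 ≤ l ≤ n−1. Then σ_l(S)·(σ_l(S)⁻¹)ᵀ = B_l(S)·(S·(S⁻¹)ᵀ)·B_l(S)⁻¹. In particular, the matrices S·(S⁻¹)ᵀ and σ_l(S)·(σ_l(S)⁻¹)ᵀ are similar and hence have the same characteristic polynomial. -/
open Matrix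

/-- Identity matrix with the `2×2` block at rows/columns `a, b` replaced by
`[[p, q], [r, t]]`. -/
def Wmat {n : ℕ} (a b : Fin n) (p q r t : ℝ) : Matrix (Fin n) (Fin n) ℝ :=
  fun i j =>
    if i = a ∧ j = a then p
    else if i = a ∧ j = b then q
    else if i = b ∧ j = a then r
    else if i = b ∧ j = b then t
    else if i = j then 1 else 0

lemma Wmat_apply {n : ℕ} (a b : Fin n) (hab : a ≠ b) (p q r t : ℝ) (i k : Fin n) :
    Wmat a b p q r t i k =
      if i = a then (if k = a then p else if k = b then q else 0)
      else if i = b then (if k = a then r else if k = b then t else 0)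
      else (if k = i then 1 else 0) := by
  unfold Wmat
  by_cases h1 : i = a <;> by_cases h2 : i = b <;> by_cases h3 : k = a <;>
    by_cases h4 : k = b <;> simp_all [eq_comm]

lemma sum_two_aux {n : ℕ} (a b : Fin n) (hab : a ≠ b) (x y : ℝ) (g : Fin n → ℝ) :
    (∑ k, (if k = a then x else if k = b then y else 0) * g k) = x * g a + y * g b := by
  have key : ∀ k, (if k = a then x else if k = b then y else 0) * g k =
      (if k = a then x * g a else 0) + (if k = b then y * g b else 0) := by
    intro k
    by_cases h1 : k = a
    · subst h1
      rw [if_pos rfl, if_pos rfl, if_neg hab, add_zero]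
    · by_cases h2 : k = b
      · subst h2
        rw [if_neg h1, if_pos rfl, if_neg h1, if_pos rfl, zero_add]
      · rw [if_neg h1, if_neg h2, if_neg h1, if_neg h2, zero_mul, add_zero]
  simp only [key, Finset.sum_add_distrib, Finset.sum_ite_eq', Finset.mem_univ, if_true]

lemma Wmat_mul {n : ℕ} (a b : Fin n) (hab : a ≠ b) (p q r t p' q' r' t' : ℝ) :
    Wmat a b p q r t * Wmat a b p' q' r' t' =
      Wmat a b (p*p'+q*r') (p*q'+q*t') (r*p'+t*r') (r*q'+t*t') := by
  ext i j
  rw [Matrix.mul_apply]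
  by_cases hi1 : i = a
  · rw [show (∑ k, Wmat a b p q r t i k * Wmat a b p' q' r' t' k j)
        = ∑ k, (if k = a then p else if k = b then q else 0) * Wmat a b p' q' r' t' k j from
        Finset.sum_congr rfl (fun k _ => by rw [Wmat_apply a b hab, if_pos hi1])]
    rw [sum_two_aux a b hab]
    rw [Wmat_apply a b hab, Wmat_apply a b hab, Wmat_apply a b hab, if_pos rfl,
      if_neg (Ne.symm hab), if_pos rfl, if_pos hi1]
    by_cases hj1 : j = a
    · simp [hj1, hab]
    · by_cases hj2 : j = b <;> simp [hj1, hj2, Ne.symm hab]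
  · by_cases hi2 : i = b
    · rw [show (∑ k, Wmat a b p q r t i k * Wmat a b p' q' r' t' k j)
          = ∑ k, (if k = a then r else if k = b then t else 0) * Wmat a b p' q' r' t' k j from
          Finset.sum_congr rfl (fun k _ => by rw [Wmat_apply a b hab, if_neg hi1, if_pos hi2])]
      rw [sum_two_aux a b hab]
      rw [Wmat_apply a b hab, Wmat_apply a b hab, Wmat_apply a b hab, if_pos rfl,
        if_neg (Ne.symm hab), if_pos rfl, if_neg hi1, if_pos hi2]
      by_cases hj1 : j = a
      · simp [hj1, hab]
      · by_cases hj2 : j = b <;> simp [hj1, hj2, Ne.symm hab]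
    · rw [show (∑ k, Wmat a b p q r t i k * Wmat a b p' q' r' t' k j)
          = ∑ k, (if k = i then 1 else 0) * Wmat a b p' q' r' t' k j from
          Finset.sum_congr rfl (fun k _ => by
            rw [Wmat_apply a b hab, if_neg hi1, if_neg hi2])]
      simp only [ite_mul, one_mul, zero_mul]
      rw [Finset.sum_ite_eq' Finset.univ i (fun k => Wmat a b p' q' r' t' k j)]
      rw [if_pos (Finset.mem_univ i), Wmat_apply a b hab, Wmat_apply a b hab,
        if_neg hi1, if_neg hi2, if_neg hi1, if_neg hi2]

lemma Wmat_one {n : ℕ} (a b : Fin n) (hab : a ≠ b) :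
    Wmat a b 1 0 0 1 = (1 : Matrix (Fin n) (Fin n) ℝ) := by
  ext i j
  rw [Wmat_apply a b hab, Matrix.one_apply]
  by_cases hi1 : i = a <;> by_cases hi2 : i = b <;> by_cases hj1 : j = a <;>
    by_cases hj2 : j = b <;> simp_all [eq_comm]

lemma Wmat_transpose {n : ℕ} (a b : Fin n) (hab : a ≠ b) (p q r t : ℝ) :
    (Wmat a b p q r t)ᵀ = Wmat a b p r q t := by
  ext i j
  rw [Matrix.transpose_apply, Wmat_apply a b hab, Wmat_apply a b hab]
  by_cases hi1 : i = a <;> by_cases hi2 : i = b <;> by_cases hj1 : j = a <;>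
    by_cases hj2 : j = b <;> simp_all [eq_comm]

/-- Characteristic polynomial is invariant under conjugation. -/
lemma charpoly_conj_aux (n : ℕ) (P M : Matrix (Fin n) (Fin n) ℝ)
    (hP : P.det ≠ 0) : (P * M * P⁻¹).charpoly = M.charpoly := by
  have hPu : IsUnit P.det := isUnit_iff_ne_zero.mpr hP
  have h1 : P * P⁻¹ = 1 := Matrix.mul_nonsing_inv P hPu
  let C := (Polynomial.C : ℝ →+* Polynomial ℝ)
  have key : charmatrix (P * M * P⁻¹) = P.map C * charmatrix M * (P⁻¹).map C := by
    have hX : P.map C * (Matrix.scalar (Fin n) (Polynomial.X : Polynomial ℝ)) * (P⁻¹).map C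
        = Matrix.scalar (Fin n) (Polynomial.X : Polynomial ℝ) := by
      rw [← Matrix.scalar_commute (Polynomial.X : Polynomial ℝ)
        (fun r => Polynomial.commute_X r) (P.map C)]
      rw [Matrix.mul_assoc, ← Matrix.map_mul, h1, Matrix.map_one C (map_zero C) (map_one C)]
      simp
    simp only [charmatrix, RingHom.mapMatrix_apply]
    rw [Matrix.mul_sub, Matrix.sub_mul, hX, ← Matrix.map_mul, ← Matrix.map_mul]
  have hdet : (P.map C).det * ((P⁻¹).map C).det = 1 := by
    rw [← Matrix.det_mul, ← Matrix.map_mul, h1, Matrix.map_one C (map_zero C) (map_one C),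
      Matrix.det_one]
  calc (P * M * P⁻¹).charpoly = (P.map C * charmatrix M * (P⁻¹).map C).det := by
        rw [Matrix.charpoly, key]
    _ = (P.map C).det * ((P⁻¹).map C).det * (charmatrix M).det := by
        rw [Matrix.det_mul, Matrix.det_mul]; ring
    _ = M.charpoly := by rw [hdet, one_mul, Matrix.charpoly]

/-- For `S` real upper unitriangular,
`σ_l(S) * (σ_l(S)⁻¹)ᵀ = B_l(S) * (S * (S⁻¹)ᵀ) * B_l(S)⁻¹`; in particular
`S (S⁻¹)ᵀ` and `σ_l(S) (σ_l(S)⁻¹)ᵀ` are similar, hence have the same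
characteristic polynomial. -/
theorem sigmal_monodromy_similar
    (n : ℕ) (hn : 2 ≤ n) (S : Matrix (Fin n) (Fin n) ℝ)
    (htri : S.BlockTriangular id) (hdiag : ∀ i, S i i = 1)
    (l : Fin n) (h : (l : ℕ) + 1 < n) :
    sigmal n l h S * ((sigmal n l h S)⁻¹)ᵀ =
        Bl n l h S * (S * (S⁻¹)ᵀ) * (Bl n l h S)⁻¹ ∧
      (sigmal n l h S * ((sigmal n l h S)⁻¹)ᵀ).charpoly =
        (S * (S⁻¹)ᵀ).charpoly := by
  have hll' : l ≠ (⟨(l : ℕ) + 1, h⟩ : Fin n) := by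
    intro he
    have := congrArg Fin.val he
    simp at this
  set s : ℝ := S l ⟨(l : ℕ) + 1, h⟩ with hs
  have hBW : Bl n l h S = Wmat l ⟨(l : ℕ) + 1, h⟩ 0 1 1 (-s) := rfl
  have hBB' : Bl n l h S * Wmat l ⟨(l : ℕ) + 1, h⟩ s 1 1 0 = 1 := by
    rw [hBW, Wmat_mul _ _ hll']
    rw [show (0*s+1*1 : ℝ) = 1 by ring, show (0*1+1*0 : ℝ) = 0 by ring,
      show (1*s+(-s)*1 : ℝ) = 0 by ring, show (1*1+(-s)*0 : ℝ) = 1 by ring]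
    exact Wmat_one _ _ hll'
  set B := Bl n l h S with hB
  have hdetB : B.det ≠ 0 := by
    intro hd
    have h1 : (B * Wmat l ⟨(l : ℕ) + 1, h⟩ s 1 1 0).det = 1 := by rw [hBB']; simp
    rw [Matrix.det_mul, hd, zero_mul] at h1
    exact zero_ne_one h1
  have hdetBu : IsUnit B.det := isUnit_iff_ne_zero.mpr hdetB
  have hB1 : B * B⁻¹ = 1 := Matrix.mul_nonsing_inv B hdetBu
  have hBsymm : Bᵀ = B := by
    rw [hBW, Wmat_transpose _ _ hll']
  have hsig : sigmal n l h S * ((sigmal n l h S)⁻¹)ᵀ = B * (S * (S⁻¹)ᵀ) * B⁻¹ := by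
    have hinv : (sigmal n l h S)⁻¹ = B⁻¹ * S⁻¹ * B⁻¹ := by
      rw [sigmal, Matrix.mul_inv_rev, Matrix.mul_inv_rev, ← hB, Matrix.mul_assoc]
    have hBt : (B⁻¹)ᵀ = B⁻¹ := by
      rw [Matrix.transpose_nonsing_inv, hBsymm]
    rw [hinv, sigmal, ← hB, Matrix.transpose_mul, Matrix.transpose_mul, hBt]
    calc B * S * B * (B⁻¹ * ((S⁻¹)ᵀ * B⁻¹))
        = B * S * (B * B⁻¹) * (S⁻¹)ᵀ * B⁻¹ := by
          noncomm_ring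
      _ = B * (S * (S⁻¹)ᵀ) * B⁻¹ := by rw [hB1]; noncomm_ring
  refine ⟨hsig, ?_⟩
  rw [hsig]
  exact charpoly_conj_aux n B (S * (S⁻¹)ᵀ) hdetB
end

section
/- Let n ≥ 2, let S be an n×n real upper unitriangular matrix, and let 1 ≤ l ≤ n−1. Then σ_l(S) + σ_l(S)ᵀ = B_l(S)·(S + Sᵀ)·B_l(S), where B_l(S) is symmetric with determinant −1. Consequently, S + Sᵀ is positive definite if and only if σ_l(S) + σ_l(S)ᵀ is positive definite. -/
set_option maxRecDepth 8000


open Matrix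

lemma posdef_congr_aux {n : Type*} [Fintype n] [DecidableEq n]
    {B M : Matrix n n ℝ} (hB : IsUnit B.det) (hBs : Bᵀ = B) (hM : M.PosDef) :
    (B * M * B).PosDef := by
  have hMs : Mᵀ = M := hM.isHermitian
  rw [posDef_iff_dotProduct_mulVec]
  constructor
  · show (B * M * B)ᵀ = B * M * B
    rw [transpose_mul, transpose_mul, hBs, hMs]
    rw [Matrix.mul_assoc]
  · intro x hx
    have : Invertible B := B.invertibleOfIsUnitDet hB
    have hBx : B *ᵥ x ≠ 0 := by
      intro hc
      apply hx
      have := B.mulVec_injective_of_invertible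
      apply this
      simpa using hc
    have hpos := hM.dotProduct_mulVec_pos hBx
    have key : star x ⬝ᵥ (B * M * B) *ᵥ x = star (B *ᵥ x) ⬝ᵥ M *ᵥ (B *ᵥ x) := by
      rw [star_trivial, star_trivial, ← mulVec_mulVec, ← mulVec_mulVec,
        dotProduct_mulVec x B, ← mulVec_transpose, hBs, dotProduct_mulVec]
    rw [key]
    exact hpos

/-- For `S` real upper unitriangular,
`σ_l(S) + σ_l(S)ᵀ = B_l(S) * (S + Sᵀ) * B_l(S)` where `B_l(S)` is symmetric of
determinant `-1`; consequently `S + Sᵀ` is positive definite iff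
`σ_l(S) + σ_l(S)ᵀ` is. -/
theorem sigmal_symmetrization_congruent
    (n : ℕ) (hn : 2 ≤ n) (S : Matrix (Fin n) (Fin n) ℝ)
    (htri : S.BlockTriangular id) (hdiag : ∀ i, S i i = 1)
    (l : Fin n) (h : (l : ℕ) + 1 < n) :
    sigmal n l h S + (sigmal n l h S)ᵀ = Bl n l h S * (S + Sᵀ) * Bl n l h S ∧
      (Bl n l h S)ᵀ = Bl n l h S ∧
      (Bl n l h S).det = -1 ∧
      ((S + Sᵀ).PosDef ↔ (sigmal n l h S + (sigmal n l h S)ᵀ).PosDef) := by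
  set l1 : Fin n := ⟨(l : ℕ) + 1, h⟩ with hl1
  have hne : l ≠ l1 := by
    intro hc
    have := congrArg Fin.val hc
    simp [hl1] at this
  set B := Bl n l h S with hB
  -- symmetry of B
  have hBs : Bᵀ = B := by
    ext i j
    show B j i = B i j
    simp only [hB, Bl, ← hl1]
    by_cases hil : i = l <;> by_cases hjl : j = l <;>
      by_cases hil1 : i = l1 <;> by_cases hjl1 : j = l1 <;>
      (clear hB hl1; simp_all [hne, hne.symm, eq_comm])
  -- determinant of B
  have hdet : B.det = -1 := by
    set s : ℝ := S l l1 with hs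
    set P : Matrix (Fin n) (Fin n) ℝ := (Equiv.swap l l1).permMatrix ℝ with hP
    have hPapply : ∀ i j, P i j = if Equiv.swap l l1 i = j then 1 else 0 := by
      intro i j
      simp [hP, Equiv.Perm.permMatrix, PEquiv.toMatrix_apply, Equiv.toPEquiv_apply]
    have hBeq : B = P.updateRow l1 (Pi.single l 1 + Pi.single l1 (-s)) := by
      ext i j
      rw [updateRow_apply]
      by_cases hil1 : i = l1
      · rw [if_pos hil1]
        simp only [hB, Bl, ← hl1, ← hs, Pi.add_apply, Pi.single_apply]
        by_cases hjl : j = l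
        · simp [hil1, hjl, hne, hne.symm]
        · by_cases hjl1 : j = l1
          · simp [hil1, hjl1, hne, hne.symm, Ne.symm hjl]
          · simp [hil1, hjl, hjl1, Ne.symm hjl, Ne.symm hjl1, hne, hne.symm]
      · rw [if_neg hil1, hPapply]
        simp only [hB, Bl, ← hl1]
        by_cases hil : i = l
        · rw [hil, Equiv.swap_apply_left]
          by_cases hjl : j = l
          · simp [hjl, hne, hne.symm]
          · by_cases hjl1 : j = l1
            · simp [hjl1, hne, hne.symm]
            · simp [hjl, hjl1, Ne.symm hjl, Ne.symm hjl1, hne, hne.symm]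
        · rw [Equiv.swap_apply_of_ne_of_ne hil hil1]
          by_cases hjl : j = l
          · simp [hjl, hil, hil1, Ne.symm hil, Ne.symm hil1, hne, hne.symm, eq_comm]
          · by_cases hjl1 : j = l1
            · simp [hjl1, hil, hil1, Ne.symm hil, Ne.symm hil1, hne, hne.symm, eq_comm]
            · simp [hil, hil1, hjl, hjl1, Ne.symm hil, Ne.symm hil1, Ne.symm hjl,
                Ne.symm hjl1, eq_comm]
    have hsingle : (Pi.single l1 (-s) : Fin n → ℝ) = (-s) • (Pi.single l1 1 : Fin n → ℝ) := by
      funext j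
      simp [Pi.single_apply]
    have hrowP : P l1 = Pi.single l 1 := by
      funext j
      rw [hPapply]
      simp [Equiv.swap_apply_right, Pi.single_apply, eq_comm]
    have h2 : (P.updateRow l1 (Pi.single l1 1)).det = 0 := by
      apply Matrix.det_zero_of_row_eq hne
      funext j
      rw [updateRow_apply, if_neg hne, updateRow_apply, if_pos rfl, hPapply]
      simp [Equiv.swap_apply_left, Pi.single_apply, eq_comm]
    have hPdet : P.det = -1 := by
      rw [hP, Matrix.det_permutation, Equiv.Perm.sign_swap hne]
      simp
    rw [hBeq, Matrix.det_updateRow_add, ← hrowP, Matrix.updateRow_eq_self, hsingle,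
      Matrix.det_updateRow_smul, h2, hPdet]
    ring
  have hdetUnit : IsUnit B.det := by rw [hdet]; exact isUnit_one.neg
  -- the congruence identity
  have hcong : sigmal n l h S + (sigmal n l h S)ᵀ = B * (S + Sᵀ) * B := by
    show B * S * B + (B * S * B)ᵀ = _
    rw [transpose_mul, transpose_mul, hBs]
    simp only [Matrix.mul_add, Matrix.add_mul, Matrix.mul_assoc]
  refine ⟨hcong, hBs, hdet, ?_⟩
  constructor
  · intro hM
    rw [hcong]
    exact posdef_congr_aux hdetUnit hBs hM
  · intro hN
    rw [hcong] at hN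
    have : Invertible B := B.invertibleOfIsUnitDet hdetUnit
    have hM : S + Sᵀ = B⁻¹ * (B * (S + Sᵀ) * B) * B⁻¹ := by
      have e : B⁻¹ * (B * (S + Sᵀ) * B) * B⁻¹ = B⁻¹ * B * ((S + Sᵀ) * (B * B⁻¹)) := by
        simp only [Matrix.mul_assoc]
      rw [e, Matrix.nonsing_inv_mul _ hdetUnit, Matrix.mul_nonsing_inv _ hdetUnit,
        Matrix.mul_one, Matrix.one_mul]
    rw [hM]
    have hBinvS : (B⁻¹)ᵀ = B⁻¹ := by rw [transpose_nonsing_inv, hBs]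
    have hBinvDet : IsUnit (B⁻¹).det := by
      rw [Matrix.det_nonsing_inv, hdet]
      simp [Ring.inverse]
    exact posdef_congr_aux hBinvDet hBinvS hN
end

section
/- Let n ≥ 1 and let a₁, …, a_{n−1} be complex numbers with |aⱼ| < 1 for all j. Then the determinant of the n×n Hermitian tridiagonal matrix 𝒜ₙ(a₁,…,a_{n−1}) (diagonal entries 2, superdiagonal entries aⱼ, subdiagonal entries conj(aⱼ), zeros elsewhere) is a real number and satisfies det 𝒜ₙ(a₁,…,a_{n−1}) ≥ 2; moreover, for n ≥ 2, det 𝒜ₙ(a₁,…,a_{n−1}) > det 𝒜_{n−1}(a₂,…,a_{n−1}). -/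
open Matrix

/-- `triA n a` is the `n × n` Hermitian tridiagonal matrix with all diagonal entries
`2`, superdiagonal entries `a 0, a 1, …` and subdiagonal entries the conjugates. -/
def triA (n : ℕ) (a : ℕ → ℂ) : Matrix (Fin n) (Fin n) ℂ :=
  fun i j =>
    if i = j then 2
    else if (j : ℕ) = (i : ℕ) + 1 then a i
    else if (i : ℕ) = (j : ℕ) + 1 then (starRingEnd ℂ) (a j)
    else 0

lemma triA_apply (n : ℕ) (a : ℕ → ℂ) (i j : Fin n) :
    triA n a i j = if (i : ℕ) = (j : ℕ) then 2
      else if (j : ℕ) = (i : ℕ) + 1 then a i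
      else if (i : ℕ) = (j : ℕ) + 1 then (starRingEnd ℂ) (a j)
      else 0 := by
  simp [triA, Fin.ext_iff]

lemma triA_zero (a : ℕ → ℂ) : (triA 0 a).det = 1 := Matrix.det_isEmpty

lemma triA_one (a : ℕ → ℂ) : (triA 1 a).det = 2 := by
  rw [Matrix.det_fin_one]; simp [triA]

lemma triA_sub_succ (n : ℕ) (a : ℕ → ℂ) :
    (triA (n+2) a).submatrix Fin.succ Fin.succ = triA (n+1) (fun j => a (j+1)) := by
  ext i j
  simp only [submatrix_apply, triA_apply, Fin.val_succ]
  by_cases h0 : (i : ℕ) = (j : ℕ)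
  · simp [h0]
  · simp only [h0, if_false, show ¬((i:ℕ)+1 = (j:ℕ)+1) by omega, if_false]
    by_cases h1 : (j : ℕ) = (i : ℕ) + 1
    · simp [h1]
    · simp only [h1, if_false, show ¬((j:ℕ)+1 = (i:ℕ)+1+1) by omega, if_false]
      by_cases h2 : (i : ℕ) = (j : ℕ) + 1
      · simp [h2]
      · simp [h2, show ¬((i:ℕ)+1 = (j:ℕ)+1+1) by omega]

lemma triA_rec (n : ℕ) (a : ℕ → ℂ) :
    (triA (n+2) a).det = 2 * (triA (n+1) (fun j => a (j+1))).det
      - a 0 * (starRingEnd ℂ) (a 0) * (triA n (fun j => a (j+2))).det := by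
  rw [Matrix.det_succ_row_zero, Fin.sum_univ_succ, Fin.sum_univ_succ]
  have hz : ∀ j : Fin n, triA (n+2) a 0 j.succ.succ = 0 := by
    intro j; simp [triA_apply]
  have h00 : triA (n+2) a 0 0 = 2 := by simp [triA_apply]
  have h01 : triA (n+2) a 0 ((0 : Fin (n+1)).succ) = a 0 := by
    simp [triA_apply]
  simp only [hz, mul_zero, zero_mul, Finset.sum_const_zero, add_zero, h00, h01]
  -- the two submatrices
  have hs0 : (triA (n+2) a).submatrix Fin.succ ((0 : Fin (n+2)).succAbove)
      = triA (n+1) (fun j => a (j+1)) := by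
    rw [Fin.succAbove_zero, triA_sub_succ]
  have hs1 : ((triA (n+2) a).submatrix Fin.succ
      (((0 : Fin (n+1)).succ : Fin (n+2)).succAbove)).det
      = (starRingEnd ℂ) (a 0) * (triA n (fun j => a (j+2))).det := by
    set B := (triA (n+2) a).submatrix Fin.succ
      (((0 : Fin (n+1)).succ : Fin (n+2)).succAbove) with hB
    have hsa0 : ((0 : Fin (n+1)).succ : Fin (n+2)).succAbove 0 = 0 := by
      rw [Fin.succAbove_of_castSucc_lt]
      · rfl
      · simp [Fin.lt_def]
    have hsas : ∀ j : Fin n, ((0 : Fin (n+1)).succ : Fin (n+2)).succAbove j.succ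
        = j.succ.succ := by
      intro j
      rw [Fin.succAbove_of_le_castSucc]
      simp [Fin.le_def]
    have hB00 : B 0 0 = (starRingEnd ℂ) (a 0) := by
      rw [hB]; simp only [submatrix_apply, hsa0, triA_apply]
      norm_num
    have hBt : ∀ i : Fin n, B i.succ 0 = 0 := by
      intro i
      rw [hB]; simp only [submatrix_apply, hsa0, triA_apply]
      simp
    have hBsub : B.submatrix Fin.succ Fin.succ = triA n (fun j => a (j+2)) := by
      ext i j
      rw [hB]
      simp only [submatrix_apply, hsas, triA_apply, Fin.val_succ]
      by_cases h0 : (i : ℕ) = (j : ℕ)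
      · simp [h0]
      · simp only [h0, if_false, show ¬((i:ℕ)+1+1 = (j:ℕ)+1+1) by omega, if_false]
        by_cases h1 : (j : ℕ) = (i : ℕ) + 1
        · simp [h1]
        · simp only [h1, if_false, show ¬((j:ℕ)+1+1 = (i:ℕ)+1+1+1) by omega, if_false]
          by_cases h2 : (i : ℕ) = (j : ℕ) + 1
          · simp [h2]
          · simp [h2, show ¬((i:ℕ)+1+1 = (j:ℕ)+1+1+1) by omega]
    rw [Matrix.det_succ_column_zero, Fin.sum_univ_succ]
    simp only [hBt, mul_zero, zero_mul, Finset.sum_const_zero, add_zero, hB00,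
      Fin.val_zero, pow_zero, one_mul, Fin.succAbove_zero, hBsub]
  rw [hs0, hs1]
  simp only [Fin.val_zero, pow_zero, one_mul, Fin.val_succ, pow_one, pow_succ]
  ring

lemma triA_key : ∀ n : ℕ, ∀ a : ℕ → ℂ, (∀ j : ℕ, j + 1 < n + 1 → ‖a j‖ < 1) →
    (triA (n+1) a).det.im = 0 ∧ 2 ≤ (triA (n+1) a).det.re ∧
    (triA n (fun j => a (j+1))).det.im = 0 ∧
    1 ≤ (triA n (fun j => a (j+1))).det.re ∧
    (triA n (fun j => a (j+1))).det.re < (triA (n+1) a).det.re := by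
  intro n
  induction n with
  | zero =>
    intro a _
    rw [triA_one, triA_zero]
    norm_num
  | succ m ih =>
    intro a ha
    obtain ⟨him, hre2, him', hre1, hlt⟩ := ih (fun j => a (j+1))
      (fun j hj => ha (j+1) (by omega))
    have ha0 : ‖a 0‖ < 1 := ha 0 (by omega)
    have ht : Complex.normSq (a 0) < 1 := by
      rw [← Complex.sq_norm]; nlinarith [norm_nonneg (a 0)]
    have ht0 : 0 ≤ Complex.normSq (a 0) := Complex.normSq_nonneg _
    simp only [show (fun j : ℕ => a (j+1+1)) = fun j => a (j+2) from rfl]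
      at him' hre1 hlt
    have hrec := triA_rec m a
    rw [Complex.mul_conj] at hrec
    set d1 := (triA (m+1) (fun j => a (j+1))).det
    set d0 := (triA m (fun j => a (j+2))).det
    have hD : (triA (m+2) a).det = 2 * d1 - (Complex.normSq (a 0) : ℂ) * d0 := hrec
    have hDim : (triA (m+2) a).det.im = 0 := by
      rw [hD]
      simp [Complex.sub_im, Complex.mul_im, him, him']
    have hDre : (triA (m+2) a).det.re = 2 * d1.re - Complex.normSq (a 0) * d0.re := by
      rw [hD]
      simp [Complex.sub_re, Complex.mul_re]
    refine ⟨hDim, ?_, him, ?_, ?_⟩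
    · rw [hDre]; nlinarith
    · linarith
    · rw [hDre]; nlinarith

/-- If all superdiagonal entries have modulus `< 1`, then
`det 𝒜ₙ(a₁,…,a_{n−1})` is real, at least `2`, and for `n ≥ 2` strictly larger than
`det 𝒜_{n−1}(a₂,…,a_{n−1})`. -/
theorem triA_det_real_ge_two_and_strict_mono
    (n : ℕ) (hn : 1 ≤ n) (a : ℕ → ℂ)
    (ha : ∀ j : ℕ, j + 1 < n → ‖a j‖ < 1) :
    (triA n a).det.im = 0 ∧ 2 ≤ (triA n a).det.re ∧
      (2 ≤ n → (triA (n - 1) (fun j => a (j + 1))).det.re < (triA n a).det.re) := by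
  obtain ⟨m, rfl⟩ : ∃ m, n = m + 1 := ⟨n - 1, by omega⟩
  obtain ⟨him, hre, _, _, hlt⟩ := triA_key m a ha
  exact ⟨him, hre, fun _ => by simpa using hlt⟩
end

section
/- Let e₁, e₃, e₄, e₅, e₆ be real numbers, each of absolute value strictly less than 1. Let F₆ be the 6×6 real symmetric matrix with all diagonal entries 2, with (F₆)_{1,2} = (F₆)_{2,1} = e₁, (F₆)_{2,3} = (F₆)_{3,2} = e₃, (F₆)_{3,4} = (F₆)_{4,3} = e₄, (F₆)_{3,6} = (F₆)_{6,3} = e₅, (F₆)_{4,5} = (F₆)_{5,4} = e₆, and all other entries 0. Then det F₆ ≥ 3. -/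
set_option maxRecDepth 8000
set_option maxHeartbeats 1600000

open Matrix

/-- E₆ determinant bound: the symmetric matrix with diagonal `2`
whose off-diagonal support is the `E₆` Dynkin diagram, with entries of absolute
value `< 1`, has determinant at least `3`. -/
theorem E6_det_ge_three
    (e1 e3 e4 e5 e6 : ℝ)
    (h1 : |e1| < 1) (h3 : |e3| < 1) (h4 : |e4| < 1) (h5 : |e5| < 1) (h6 : |e6| < 1) :
    (3 : ℝ) ≤
      (!![2, e1, 0, 0, 0, 0;
          e1, 2, e3, 0, 0, 0;
          0, e3, 2, e4, 0, e5;
          0, 0, e4, 2, e6, 0;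
          0, 0, 0, e6, 2, 0;
          0, 0, e5, 0, 0, 2] : Matrix (Fin 6) (Fin 6) ℝ).det := by
  have ha : (0:ℝ) < 1 - e1 ^ 2 := by nlinarith [sq_abs e1, abs_nonneg e1]
  have hb : (0:ℝ) < 1 - e3 ^ 2 := by nlinarith [sq_abs e3, abs_nonneg e3]
  have hc : (0:ℝ) < 1 - e4 ^ 2 := by nlinarith [sq_abs e4, abs_nonneg e4]
  have hd : (0:ℝ) < 1 - e5 ^ 2 := by nlinarith [sq_abs e5, abs_nonneg e5]
  have hf : (0:ℝ) < 1 - e6 ^ 2 := by nlinarith [sq_abs e6, abs_nonneg e6]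
  simp [Matrix.det_succ_row_zero, Fin.sum_univ_succ, Fin.succAbove, Fin.castSucc, Fin.castAdd, Fin.castLE]
  ring_nf
  nlinarith [mul_pos ha hd, mul_pos ha hf, mul_pos hd hf, mul_pos hb hf,
    mul_pos ha hc, mul_pos (mul_pos ha hd) hf]
end

section
/- Let e₁, e₃, e₄, e₅, e₆, e₇ be real numbers, each of absolute value strictly less than 1. Let F₇ be the 7×7 real symmetric matrix with all diagonal entries 2, with (F₇)_{1,2} = e₁, (F₇)_{2,3} = e₃, (F₇)_{3,4} = e₄, (F₇)_{4,5} = e₅, (F₇)_{4,7} = e₆, (F₇)_{5,6} = e₇ (and symmetrically below the diagonal), and all other entries 0. Then det F₇ ≥ 2. -/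
open Matrix

set_option maxHeartbeats 4000000 in
set_option maxRecDepth 8000 in
private lemma detA_aux (e3 e4 e5 e6 e7 : ℝ) :
      (!![2, e3, 0, 0, 0, 0;
          e3, 2, e4, 0, 0, 0;
          0, e4, 2, e5, 0, e6;
          0, 0, e5, 2, e7, 0;
          0, 0, 0, e7, 2, 0;
          0, 0, e6, 0, 0, 2] : Matrix (Fin 6) (Fin 6) ℝ).det =
    64 - 16*(e3^2+e4^2+e5^2+e6^2+e7^2)
    + 4*(e3^2*e5^2+e3^2*e6^2+e3^2*e7^2+e4^2*e7^2+e6^2*e7^2) - e3^2*e6^2*e7^2 := by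
  simp [Matrix.det_succ_row_zero, Fin.sum_univ_succ, Fin.succAbove, Fin.castSucc,
    Fin.castAdd, Fin.castLE]
  ring

set_option maxHeartbeats 4000000 in
set_option maxRecDepth 8000 in
private lemma detB_aux (e1 e3 e4 e5 e6 e7 : ℝ) :
      (!![e1, e3, 0, 0, 0, 0;
          0, 2, e4, 0, 0, 0;
          0, e4, 2, e5, 0, e6;
          0, 0, e5, 2, e7, 0;
          0, 0, 0, e7, 2, 0;
          0, 0, e6, 0, 0, 2] : Matrix (Fin 6) (Fin 6) ℝ).det =
    e1 * (32 - 8*(e4^2+e5^2+e6^2+e7^2) + 2*e6^2*e7^2 + 2*e4^2*e7^2) := by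
  simp [Matrix.det_succ_row_zero, Fin.sum_univ_succ, Fin.succAbove, Fin.castSucc,
    Fin.castAdd, Fin.castLE]
  left; ring

set_option maxHeartbeats 4000000 in
private lemma det7_aux (e1 e3 e4 e5 e6 e7 : ℝ) :
      (!![2, e1, 0, 0, 0, 0, 0;
          e1, 2, e3, 0, 0, 0, 0;
          0, e3, 2, e4, 0, 0, 0;
          0, 0, e4, 2, e5, 0, e6;
          0, 0, 0, e5, 2, e7, 0;
          0, 0, 0, 0, e7, 2, 0;
          0, 0, 0, e6, 0, 0, 2] : Matrix (Fin 7) (Fin 7) ℝ).det =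
    128 - 32*(e1^2+e3^2+e4^2+e5^2+e6^2+e7^2)
    + 8*(e6^2*e7^2+e4^2*e7^2+e3^2*e7^2+e3^2*e6^2+e3^2*e5^2+e1^2*e7^2+e1^2*e6^2+e1^2*e5^2+e1^2*e4^2)
    - 2*(e3^2*e6^2*e7^2+e1^2*e6^2*e7^2+e1^2*e4^2*e7^2) := by
  rw [Matrix.det_succ_row_zero]
  rw [Fin.sum_univ_succ, Fin.sum_univ_succ, Fin.sum_univ_succ, Fin.sum_univ_succ,
    Fin.sum_univ_succ, Fin.sum_univ_succ, Fin.sum_univ_one]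
  have hA : ((!![2, e1, 0, 0, 0, 0, 0;
          e1, 2, e3, 0, 0, 0, 0;
          0, e3, 2, e4, 0, 0, 0;
          0, 0, e4, 2, e5, 0, e6;
          0, 0, 0, e5, 2, e7, 0;
          0, 0, 0, 0, e7, 2, 0;
          0, 0, 0, e6, 0, 0, 2] : Matrix (Fin 7) (Fin 7) ℝ).submatrix
            Fin.succ (Fin.succAbove 0)) =
      !![2, e3, 0, 0, 0, 0;
          e3, 2, e4, 0, 0, 0;
          0, e4, 2, e5, 0, e6;
          0, 0, e5, 2, e7, 0;
          0, 0, 0, e7, 2, 0;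
          0, 0, e6, 0, 0, 2] := by
    ext i j; fin_cases i <;> fin_cases j <;> rfl
  have hB : ((!![2, e1, 0, 0, 0, 0, 0;
          e1, 2, e3, 0, 0, 0, 0;
          0, e3, 2, e4, 0, 0, 0;
          0, 0, e4, 2, e5, 0, e6;
          0, 0, 0, e5, 2, e7, 0;
          0, 0, 0, 0, e7, 2, 0;
          0, 0, 0, e6, 0, 0, 2] : Matrix (Fin 7) (Fin 7) ℝ).submatrix
            Fin.succ ((Fin.succ 0).succAbove)) =
      !![e1, e3, 0, 0, 0, 0;
          0, 2, e4, 0, 0, 0;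
          0, e4, 2, e5, 0, e6;
          0, 0, e5, 2, e7, 0;
          0, 0, 0, e7, 2, 0;
          0, 0, e6, 0, 0, 2] := by
    ext i j; fin_cases i <;> fin_cases j <;> rfl
  rw [hA, hB]
  simp
  rw [detA_aux, detB_aux]
  ring

/-- E₇ determinant bound: the symmetric matrix with diagonal `2`
whose off-diagonal support is the `E₇` Dynkin diagram, with entries of absolute
value `< 1`, has determinant at least `2`. -/
theorem E7_det_ge_two
    (e1 e3 e4 e5 e6 e7 : ℝ)
    (h1 : |e1| < 1) (h3 : |e3| < 1) (h4 : |e4| < 1) (h5 : |e5| < 1)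
    (h6 : |e6| < 1) (h7 : |e7| < 1) :
    (2 : ℝ) ≤
      (!![2, e1, 0, 0, 0, 0, 0;
          e1, 2, e3, 0, 0, 0, 0;
          0, e3, 2, e4, 0, 0, 0;
          0, 0, e4, 2, e5, 0, e6;
          0, 0, 0, e5, 2, e7, 0;
          0, 0, 0, 0, e7, 2, 0;
          0, 0, 0, e6, 0, 0, 2] : Matrix (Fin 7) (Fin 7) ℝ).det := by
  rw [det7_aux]
  have sq : ∀ x : ℝ, |x| < 1 → x ^ 2 ≤ 1 := by
    intro x hx
    have := abs_nonneg x
    nlinarith [sq_abs x]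
  have ha1 := sq _ h1; have hb1 := sq _ h3; have hc1 := sq _ h4
  have hp1 := sq _ h5; have hq1 := sq _ h6; have hr1 := sq _ h7
  set a := e1 ^ 2; set b := e3 ^ 2; set c := e4 ^ 2
  set p := e5 ^ 2; set q := e6 ^ 2; set r := e7 ^ 2
  have ha0 : 0 ≤ a := sq_nonneg _
  have hb0 : 0 ≤ b := sq_nonneg _
  have hc0 : 0 ≤ c := sq_nonneg _
  have hp0 : 0 ≤ p := sq_nonneg _
  have hq0 : 0 ≤ q := sq_nonneg _
  have hr0 : 0 ≤ r := sq_nonneg _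
  nlinarith [mul_nonneg (sub_nonneg.2 ha1) (sub_nonneg.2 hb1), mul_nonneg (sub_nonneg.2 ha1) (sub_nonneg.2 hc1),
    mul_nonneg (sub_nonneg.2 ha1) (sub_nonneg.2 hp1), mul_nonneg (sub_nonneg.2 ha1) (sub_nonneg.2 hq1),
    mul_nonneg (sub_nonneg.2 ha1) (sub_nonneg.2 hr1), mul_nonneg (sub_nonneg.2 hb1) (sub_nonneg.2 hc1),
    mul_nonneg (sub_nonneg.2 hb1) (sub_nonneg.2 hp1), mul_nonneg (sub_nonneg.2 hb1) (sub_nonneg.2 hq1),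
    mul_nonneg (sub_nonneg.2 hb1) (sub_nonneg.2 hr1), mul_nonneg (sub_nonneg.2 hc1) (sub_nonneg.2 hp1),
    mul_nonneg (sub_nonneg.2 hc1) (sub_nonneg.2 hq1), mul_nonneg (sub_nonneg.2 hc1) (sub_nonneg.2 hr1),
    mul_nonneg (sub_nonneg.2 hp1) (sub_nonneg.2 hq1), mul_nonneg (sub_nonneg.2 hp1) (sub_nonneg.2 hr1),
    mul_nonneg (sub_nonneg.2 hq1) (sub_nonneg.2 hr1),
    mul_nonneg hq0 hr0, mul_nonneg (mul_nonneg hq0 hr0) hb0, mul_nonneg (mul_nonneg hq0 hr0) ha0,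
    mul_nonneg (mul_nonneg ha0 hc0) hr0]
end

section
/- Let e₁, e₃, e₄, e₅, e₆, e₇, e₈ be real numbers, each of absolute value strictly less than 1. Let F₈ be the 8×8 real symmetric matrix with all diagonal entries 2, with (F₈)_{1,2} = e₁, (F₈)_{2,3} = e₃, (F₈)_{3,4} = e₄, (F₈)_{4,5} = e₅, (F₈)_{5,6} = e₆, (F₈)_{5,8} = e₇, (F₈)_{6,7} = e₈ (and symmetrically below the diagonal), and all other entries 0. Then det F₈ ≥ 1. -/
open Matrix

set_option maxHeartbeats 4000000 in
set_option maxRecDepth 8000 in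
private lemma LM6 (e4 e5 e6 e7 e8 : ℝ) :
    (!![2, e4, 0, 0, 0, 0;
        e4, 2, e5, 0, 0, 0;
        0, e5, 2, e6, 0, e7;
        0, 0, e6, 2, e8, 0;
        0, 0, 0, e8, 2, 0;
        0, 0, e7, 0, 0, 2] : Matrix (Fin 6) (Fin 6) ℝ).det =
    64 - 16*e8^2 - 16*e7^2 + 4*e7^2*e8^2 - 16*e6^2 - 16*e5^2 + 4*e5^2*e8^2
      - 16*e4^2 + 4*e4^2*e8^2 + 4*e4^2*e7^2 - e4^2*e7^2*e8^2 + 4*e4^2*e6^2 := by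
  simp [Matrix.det_succ_row_zero, Fin.sum_univ_succ, Fin.succAbove, Fin.castSucc,
    Fin.castAdd, Fin.castLE]
  ring

set_option maxHeartbeats 4000000 in
set_option maxRecDepth 8000 in
private lemma LN6 (e3 e4 e5 e6 e7 e8 : ℝ) :
    (!![e3, e4, 0, 0, 0, 0;
        0, 2, e5, 0, 0, 0;
        0, e5, 2, e6, 0, e7;
        0, 0, e6, 2, e8, 0;
        0, 0, 0, e8, 2, 0;
        0, 0, e7, 0, 0, 2] : Matrix (Fin 6) (Fin 6) ℝ).det =
    32*e3 - 8*e3*e8^2 - 8*e3*e7^2 + 2*e3*e7^2*e8^2 - 8*e3*e6^2 - 8*e3*e5^2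
      + 2*e3*e5^2*e8^2 := by
  simp [Matrix.det_succ_row_zero, Fin.sum_univ_succ, Fin.succAbove, Fin.castSucc,
    Fin.castAdd, Fin.castLE]
  ring

set_option maxHeartbeats 4000000 in
set_option maxRecDepth 8000 in
private lemma LM7 (e3 e4 e5 e6 e7 e8 : ℝ) :
    (!![2, e3, 0, 0, 0, 0, 0;
        e3, 2, e4, 0, 0, 0, 0;
        0, e4, 2, e5, 0, 0, 0;
        0, 0, e5, 2, e6, 0, e7;
        0, 0, 0, e6, 2, e8, 0;
        0, 0, 0, 0, e8, 2, 0;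
        0, 0, 0, e7, 0, 0, 2] : Matrix (Fin 7) (Fin 7) ℝ).det =
    128 - 32*e8^2 - 32*e7^2 + 8*e7^2*e8^2 - 32*e6^2 - 32*e5^2 + 8*e5^2*e8^2
      - 32*e4^2 + 8*e4^2*e8^2 + 8*e4^2*e7^2 - 2*e4^2*e7^2*e8^2 + 8*e4^2*e6^2
      - 32*e3^2 + 8*e3^2*e8^2 + 8*e3^2*e7^2 - 2*e3^2*e7^2*e8^2 + 8*e3^2*e6^2
      + 8*e3^2*e5^2 - 2*e3^2*e5^2*e8^2 := by
  rw [Matrix.det_succ_row_zero, Fin.sum_univ_seven]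
  have h0 : (!![2, e3, 0, 0, 0, 0, 0;
        e3, 2, e4, 0, 0, 0, 0;
        0, e4, 2, e5, 0, 0, 0;
        0, 0, e5, 2, e6, 0, e7;
        0, 0, 0, e6, 2, e8, 0;
        0, 0, 0, 0, e8, 2, 0;
        0, 0, 0, e7, 0, 0, 2] : Matrix (Fin 7) (Fin 7) ℝ).submatrix Fin.succ Fin.succ
      = !![2, e4, 0, 0, 0, 0;
        e4, 2, e5, 0, 0, 0;
        0, e5, 2, e6, 0, e7;
        0, 0, e6, 2, e8, 0;
        0, 0, 0, e8, 2, 0;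
        0, 0, e7, 0, 0, 2] := by
    ext i j; fin_cases i <;> fin_cases j <;> rfl
  have h1 : (!![2, e3, 0, 0, 0, 0, 0;
        e3, 2, e4, 0, 0, 0, 0;
        0, e4, 2, e5, 0, 0, 0;
        0, 0, e5, 2, e6, 0, e7;
        0, 0, 0, e6, 2, e8, 0;
        0, 0, 0, 0, e8, 2, 0;
        0, 0, 0, e7, 0, 0, 2] : Matrix (Fin 7) (Fin 7) ℝ).submatrix Fin.succ (Fin.succAbove 1)
      = !![e3, e4, 0, 0, 0, 0;
        0, 2, e5, 0, 0, 0;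
        0, e5, 2, e6, 0, e7;
        0, 0, e6, 2, e8, 0;
        0, 0, 0, e8, 2, 0;
        0, 0, e7, 0, 0, 2] := by
    ext i j; fin_cases i <;> fin_cases j <;> rfl
  norm_num [h0, h1, LM6, LN6,
    show ((![2, e3, 0, 0, 0, 0, 0] : Fin 7 → ℝ) 2) = 0 from rfl,
    show ((![2, e3, 0, 0, 0, 0, 0] : Fin 7 → ℝ) 3) = 0 from rfl,
    show ((![2, e3, 0, 0, 0, 0, 0] : Fin 7 → ℝ) 4) = 0 from rfl,
    show ((![2, e3, 0, 0, 0, 0, 0] : Fin 7 → ℝ) 5) = 0 from rfl,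
    show ((![2, e3, 0, 0, 0, 0, 0] : Fin 7 → ℝ) 6) = 0 from rfl]
  ring

set_option maxHeartbeats 4000000 in
set_option maxRecDepth 8000 in
private lemma LN7 (e1 e3 e4 e5 e6 e7 e8 : ℝ) :
    (!![e1, e3, 0, 0, 0, 0, 0;
        0, 2, e4, 0, 0, 0, 0;
        0, e4, 2, e5, 0, 0, 0;
        0, 0, e5, 2, e6, 0, e7;
        0, 0, 0, e6, 2, e8, 0;
        0, 0, 0, 0, e8, 2, 0;
        0, 0, 0, e7, 0, 0, 2] : Matrix (Fin 7) (Fin 7) ℝ).det =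
    e1 * (64 - 16*e8^2 - 16*e7^2 + 4*e7^2*e8^2 - 16*e6^2 - 16*e5^2 + 4*e5^2*e8^2
      - 16*e4^2 + 4*e4^2*e8^2 + 4*e4^2*e7^2 - e4^2*e7^2*e8^2 + 4*e4^2*e6^2) := by
  rw [Matrix.det_succ_column_zero, Fin.sum_univ_seven]
  have h0 : (!![e1, e3, 0, 0, 0, 0, 0;
        0, 2, e4, 0, 0, 0, 0;
        0, e4, 2, e5, 0, 0, 0;
        0, 0, e5, 2, e6, 0, e7;
        0, 0, 0, e6, 2, e8, 0;
        0, 0, 0, 0, e8, 2, 0;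
        0, 0, 0, e7, 0, 0, 2] : Matrix (Fin 7) (Fin 7) ℝ).submatrix Fin.succ Fin.succ
      = !![2, e4, 0, 0, 0, 0;
        e4, 2, e5, 0, 0, 0;
        0, e5, 2, e6, 0, e7;
        0, 0, e6, 2, e8, 0;
        0, 0, 0, e8, 2, 0;
        0, 0, e7, 0, 0, 2] := by
    ext i j; fin_cases i <;> fin_cases j <;> rfl
  norm_num [h0, LM6, Matrix.vecHead, Matrix.vecTail, Function.comp,
    show ((!![e1, e3, 0, 0, 0, 0, 0;
        0, 2, e4, 0, 0, 0, 0;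
        0, e4, 2, e5, 0, 0, 0;
        0, 0, e5, 2, e6, 0, e7;
        0, 0, 0, e6, 2, e8, 0;
        0, 0, 0, 0, e8, 2, 0;
        0, 0, 0, e7, 0, 0, 2] : Matrix (Fin 7) (Fin 7) ℝ) 2 0) = 0 from rfl,
    show ((!![e1, e3, 0, 0, 0, 0, 0;
        0, 2, e4, 0, 0, 0, 0;
        0, e4, 2, e5, 0, 0, 0;
        0, 0, e5, 2, e6, 0, e7;
        0, 0, 0, e6, 2, e8, 0;
        0, 0, 0, 0, e8, 2, 0;
        0, 0, 0, e7, 0, 0, 2] : Matrix (Fin 7) (Fin 7) ℝ) 3 0) = 0 from rfl,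
    show ((!![e1, e3, 0, 0, 0, 0, 0;
        0, 2, e4, 0, 0, 0, 0;
        0, e4, 2, e5, 0, 0, 0;
        0, 0, e5, 2, e6, 0, e7;
        0, 0, 0, e6, 2, e8, 0;
        0, 0, 0, 0, e8, 2, 0;
        0, 0, 0, e7, 0, 0, 2] : Matrix (Fin 7) (Fin 7) ℝ) 4 0) = 0 from rfl,
    show ((!![e1, e3, 0, 0, 0, 0, 0;
        0, 2, e4, 0, 0, 0, 0;
        0, e4, 2, e5, 0, 0, 0;
        0, 0, e5, 2, e6, 0, e7;
        0, 0, 0, e6, 2, e8, 0;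
        0, 0, 0, 0, e8, 2, 0;
        0, 0, 0, e7, 0, 0, 2] : Matrix (Fin 7) (Fin 7) ℝ) 5 0) = 0 from rfl,
    show ((!![e1, e3, 0, 0, 0, 0, 0;
        0, 2, e4, 0, 0, 0, 0;
        0, e4, 2, e5, 0, 0, 0;
        0, 0, e5, 2, e6, 0, e7;
        0, 0, 0, e6, 2, e8, 0;
        0, 0, 0, 0, e8, 2, 0;
        0, 0, 0, e7, 0, 0, 2] : Matrix (Fin 7) (Fin 7) ℝ) 6 0) = 0 from rfl]

set_option maxHeartbeats 4000000 in
set_option maxRecDepth 8000 in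
private lemma LM8 (e1 e3 e4 e5 e6 e7 e8 : ℝ) :
    (!![2, e1, 0, 0, 0, 0, 0, 0;
        e1, 2, e3, 0, 0, 0, 0, 0;
        0, e3, 2, e4, 0, 0, 0, 0;
        0, 0, e4, 2, e5, 0, 0, 0;
        0, 0, 0, e5, 2, e6, 0, e7;
        0, 0, 0, 0, e6, 2, e8, 0;
        0, 0, 0, 0, 0, e8, 2, 0;
        0, 0, 0, 0, e7, 0, 0, 2] : Matrix (Fin 8) (Fin 8) ℝ).det =
    256 - 64*e8^2 - 64*e7^2 + 16*e7^2*e8^2 - 64*e6^2 - 64*e5^2 + 16*e5^2*e8^2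
      - 64*e4^2 + 16*e4^2*e8^2 + 16*e4^2*e7^2 - 4*e4^2*e7^2*e8^2 + 16*e4^2*e6^2
      - 64*e3^2 + 16*e3^2*e8^2 + 16*e3^2*e7^2 - 4*e3^2*e7^2*e8^2 + 16*e3^2*e6^2
      + 16*e3^2*e5^2 - 4*e3^2*e5^2*e8^2
      - 64*e1^2 + 16*e1^2*e8^2 + 16*e1^2*e7^2 - 4*e1^2*e7^2*e8^2 + 16*e1^2*e6^2
      + 16*e1^2*e5^2 - 4*e1^2*e5^2*e8^2 + 16*e1^2*e4^2 - 4*e1^2*e4^2*e8^2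
      - 4*e1^2*e4^2*e7^2 + e1^2*e4^2*e7^2*e8^2 - 4*e1^2*e4^2*e6^2 := by
  rw [Matrix.det_succ_row_zero, Fin.sum_univ_eight]
  have h0 : (!![2, e1, 0, 0, 0, 0, 0, 0;
        e1, 2, e3, 0, 0, 0, 0, 0;
        0, e3, 2, e4, 0, 0, 0, 0;
        0, 0, e4, 2, e5, 0, 0, 0;
        0, 0, 0, e5, 2, e6, 0, e7;
        0, 0, 0, 0, e6, 2, e8, 0;
        0, 0, 0, 0, 0, e8, 2, 0;
        0, 0, 0, 0, e7, 0, 0, 2] : Matrix (Fin 8) (Fin 8) ℝ).submatrix Fin.succ Fin.succ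
      = !![2, e3, 0, 0, 0, 0, 0;
        e3, 2, e4, 0, 0, 0, 0;
        0, e4, 2, e5, 0, 0, 0;
        0, 0, e5, 2, e6, 0, e7;
        0, 0, 0, e6, 2, e8, 0;
        0, 0, 0, 0, e8, 2, 0;
        0, 0, 0, e7, 0, 0, 2] := by
    ext i j; fin_cases i <;> fin_cases j <;> rfl
  have h1 : (!![2, e1, 0, 0, 0, 0, 0, 0;
        e1, 2, e3, 0, 0, 0, 0, 0;
        0, e3, 2, e4, 0, 0, 0, 0;
        0, 0, e4, 2, e5, 0, 0, 0;
        0, 0, 0, e5, 2, e6, 0, e7;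
        0, 0, 0, 0, e6, 2, e8, 0;
        0, 0, 0, 0, 0, e8, 2, 0;
        0, 0, 0, 0, e7, 0, 0, 2] : Matrix (Fin 8) (Fin 8) ℝ).submatrix Fin.succ (Fin.succAbove 1)
      = !![e1, e3, 0, 0, 0, 0, 0;
        0, 2, e4, 0, 0, 0, 0;
        0, e4, 2, e5, 0, 0, 0;
        0, 0, e5, 2, e6, 0, e7;
        0, 0, 0, e6, 2, e8, 0;
        0, 0, 0, 0, e8, 2, 0;
        0, 0, 0, e7, 0, 0, 2] := by
    ext i j; fin_cases i <;> fin_cases j <;> rfl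
  norm_num [h0, h1, LM7, LN7,
    show ((![2, e1, 0, 0, 0, 0, 0, 0] : Fin 8 → ℝ) 2) = 0 from rfl,
    show ((![2, e1, 0, 0, 0, 0, 0, 0] : Fin 8 → ℝ) 3) = 0 from rfl,
    show ((![2, e1, 0, 0, 0, 0, 0, 0] : Fin 8 → ℝ) 4) = 0 from rfl,
    show ((![2, e1, 0, 0, 0, 0, 0, 0] : Fin 8 → ℝ) 5) = 0 from rfl,
    show ((![2, e1, 0, 0, 0, 0, 0, 0] : Fin 8 → ℝ) 6) = 0 from rfl,
    show ((![2, e1, 0, 0, 0, 0, 0, 0] : Fin 8 → ℝ) 7) = 0 from rfl]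
  ring

/-- E₈ determinant bound: the symmetric matrix with diagonal `2`
whose off-diagonal support is the `E₈` Dynkin diagram, with entries of absolute
value `< 1`, has determinant at least `1`. -/
theorem E8_det_ge_one
    (e1 e3 e4 e5 e6 e7 e8 : ℝ)
    (h1 : |e1| < 1) (h3 : |e3| < 1) (h4 : |e4| < 1) (h5 : |e5| < 1)
    (h6 : |e6| < 1) (h7 : |e7| < 1) (h8 : |e8| < 1) :
    (1 : ℝ) ≤
      (!![2, e1, 0, 0, 0, 0, 0, 0;
          e1, 2, e3, 0, 0, 0, 0, 0;
          0, e3, 2, e4, 0, 0, 0, 0;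
          0, 0, e4, 2, e5, 0, 0, 0;
          0, 0, 0, e5, 2, e6, 0, e7;
          0, 0, 0, 0, e6, 2, e8, 0;
          0, 0, 0, 0, 0, e8, 2, 0;
          0, 0, 0, 0, e7, 0, 0, 2] : Matrix (Fin 8) (Fin 8) ℝ).det := by
  have hb0 : (0:ℝ) ≤ 1 - e1^2 := by nlinarith [sq_abs e1, abs_nonneg e1]
  have hb1 : (0:ℝ) ≤ 1 - e3^2 := by nlinarith [sq_abs e3, abs_nonneg e3]
  have hb2 : (0:ℝ) ≤ 1 - e4^2 := by nlinarith [sq_abs e4, abs_nonneg e4]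
  have hb3 : (0:ℝ) ≤ 1 - e5^2 := by nlinarith [sq_abs e5, abs_nonneg e5]
  have hb4 : (0:ℝ) ≤ 1 - e6^2 := by nlinarith [sq_abs e6, abs_nonneg e6]
  have hb5 : (0:ℝ) ≤ 1 - e7^2 := by nlinarith [sq_abs e7, abs_nonneg e7]
  have hb6 : (0:ℝ) ≤ 1 - e8^2 := by nlinarith [sq_abs e8, abs_nonneg e8]
  have p0 := (mul_nonneg hb5 hb6)
  have p1 := (mul_nonneg hb3 hb6)
  have p2 := (mul_nonneg hb2 hb6)
  have p3 := (mul_nonneg hb2 hb5)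
  have p4 := (mul_nonneg hb2 hb4)
  have p5 := (mul_nonneg hb1 hb6)
  have p6 := (mul_nonneg hb1 hb5)
  have p7 := (mul_nonneg hb1 hb4)
  have p8 := (mul_nonneg hb1 hb3)
  have p9 := (mul_nonneg hb0 hb6)
  have p10 := (mul_nonneg hb0 hb5)
  have p11 := (mul_nonneg hb0 hb4)
  have p12 := (mul_nonneg hb0 hb3)
  have p13 := (mul_nonneg hb0 hb2)
  have p14 := (mul_nonneg (mul_nonneg hb2 hb5) hb6)
  have p15 := (mul_nonneg (mul_nonneg hb1 hb5) hb6)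
  have p16 := (mul_nonneg (mul_nonneg hb1 hb3) hb6)
  have p17 := (mul_nonneg (mul_nonneg hb0 hb5) hb6)
  have p18 := (mul_nonneg (mul_nonneg hb0 hb3) hb6)
  have p19 := (mul_nonneg (mul_nonneg hb0 hb2) hb6)
  have p20 := (mul_nonneg (mul_nonneg hb0 hb2) hb5)
  have p21 := (mul_nonneg (mul_nonneg hb0 hb2) hb4)
  have p22 := (mul_nonneg (mul_nonneg (mul_nonneg hb0 hb2) hb5) hb6)

  rw [LM8]
  linarith
end

section
/- Let a₁, a₂, a₃, a₄, a₅ be complex numbers, each of modulus strictly less than 1. Let M be the 6×6 Hermitian matrix with all diagonal entries 2, with M_{1,2} = a₁, M_{2,3} = a₂, M_{3,4} = a₃, M_{3,6} = a₄, M_{4,5} = a₅, with the entries below the diagonal given by the complex conjugates (M_{j,i} = conj(M_{i,j})), and all other entries 0. Then M is positive definite. -/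
open Matrix
open scoped ComplexOrder

set_option maxHeartbeats 1000000 in
private theorem E6_core (n0 n1 n2 n3 n4 n5 : ℝ)
    (hpos : 0 < n0 ∨ 0 < n1 ∨ 0 < n2 ∨ 0 < n3 ∨ 0 < n4 ∨ 0 < n5) :
    0 < 2*(n0^2+n1^2+n2^2+n3^2+n4^2+n5^2) - 2*(n0*n1+n1*n2+n2*n3+n2*n5+n3*n4) := by
  have key : (1/20) * (n0^2+n1^2+n2^2+n3^2+n4^2+n5^2) ≤
      2*(n0^2+n1^2+n2^2+n3^2+n4^2+n5^2) - 2*(n0*n1+n1*n2+n2*n3+n2*n5+n3*n4) := by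
    nlinarith [sq_nonneg (39*n0 - 20*n1), sq_nonneg (1121*n1 - 780*n2),
      sq_nonneg (28119*n2 - 22420*n3 - 22420*n5),
      sq_nonneg (648241*n3 - 562380*n4 - 448400*n5),
      sq_nonneg (12519*n4 - 8000*n5), sq_nonneg n5]
  rcases hpos with h|h|h|h|h|h <;> nlinarith [sq_nonneg n0, sq_nonneg n1, sq_nonneg n2,
    sq_nonneg n3, sq_nonneg n4, sq_nonneg n5, mul_pos h h]

private theorem E6_edge (a u v : ℂ) (ha : ‖a‖ < 1) :
    -(‖u‖ * ‖v‖) ≤ (a * ((starRingEnd ℂ) u * v)).re := by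
  have h1 : -(‖a * ((starRingEnd ℂ) u * v)‖) ≤ (a * ((starRingEnd ℂ) u * v)).re :=
    neg_le_of_abs_le (Complex.abs_re_le_norm _)
  have h2 : ‖a * ((starRingEnd ℂ) u * v)‖ ≤ ‖u‖ * ‖v‖ := by
    rw [norm_mul, norm_mul, Complex.norm_conj]
    calc ‖a‖ * (‖u‖ * ‖v‖)
        ≤ 1 * (‖u‖ * ‖v‖) := by
          apply mul_le_mul_of_nonneg_right ha.le (by positivity)
      _ = _ := one_mul _
  linarith

set_option maxHeartbeats 1000000 in
/-- E₆ case of Lemma 5.3: the Hermitian matrix with diagonal `2`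
whose off-diagonal support is the `E₆` Dynkin diagram, with entries of modulus `< 1`
(and conjugate entries below the diagonal), is positive definite. -/
theorem E6_posDef
    (a1 a2 a3 a4 a5 : ℂ)
    (h1 : ‖a1‖ < 1) (h2 : ‖a2‖ < 1) (h3 : ‖a3‖ < 1)
    (h4 : ‖a4‖ < 1) (h5 : ‖a5‖ < 1) :
    (!![2, a1, 0, 0, 0, 0;
        (starRingEnd ℂ) a1, 2, a2, 0, 0, 0;
        0, (starRingEnd ℂ) a2, 2, a3, 0, a4;
        0, 0, (starRingEnd ℂ) a3, 2, a5, 0;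
        0, 0, 0, (starRingEnd ℂ) a5, 2, 0;
        0, 0, (starRingEnd ℂ) a4, 0, 0, 2] : Matrix (Fin 6) (Fin 6) ℂ).PosDef := by
  rw [posDef_iff_dotProduct_mulVec]
  constructor
  · ext i j
    fin_cases i <;> fin_cases j <;> simp [Matrix.conjTranspose_apply, Matrix.vecHead, Matrix.vecTail, show ((5:Fin 6)) = Fin.succ 4 from rfl, Matrix.cons_val_succ]
  · intro x hx
    simp only [dotProduct, mulVec, Fin.sum_univ_six, Pi.star_apply, RCLike.star_def]
    show (0:ℂ) <
      (starRingEnd ℂ) (x 0) * (2 * x 0 + a1 * x 1 + 0 * x 2 + 0 * x 3 + 0 * x 4 + 0 * x 5) +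
      (starRingEnd ℂ) (x 1) * ((starRingEnd ℂ) a1 * x 0 + 2 * x 1 + a2 * x 2 + 0 * x 3 + 0 * x 4 + 0 * x 5) +
      (starRingEnd ℂ) (x 2) * (0 * x 0 + (starRingEnd ℂ) a2 * x 1 + 2 * x 2 + a3 * x 3 + 0 * x 4 + a4 * x 5) +
      (starRingEnd ℂ) (x 3) * (0 * x 0 + 0 * x 1 + (starRingEnd ℂ) a3 * x 2 + 2 * x 3 + a5 * x 4 + 0 * x 5) +
      (starRingEnd ℂ) (x 4) * (0 * x 0 + 0 * x 1 + 0 * x 2 + (starRingEnd ℂ) a5 * x 3 + 2 * x 4 + 0 * x 5) +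
      (starRingEnd ℂ) (x 5) * (0 * x 0 + 0 * x 1 + (starRingEnd ℂ) a4 * x 2 + 0 * x 3 + 0 * x 4 + 2 * x 5)
    rw [Complex.lt_def]
    constructor
    · simp only [Complex.zero_re]
      have hre : ((starRingEnd ℂ) (x 0) * (2 * x 0 + a1 * x 1 + 0 * x 2 + 0 * x 3 + 0 * x 4 + 0 * x 5) +
          (starRingEnd ℂ) (x 1) * ((starRingEnd ℂ) a1 * x 0 + 2 * x 1 + a2 * x 2 + 0 * x 3 + 0 * x 4 + 0 * x 5) +
          (starRingEnd ℂ) (x 2) * (0 * x 0 + (starRingEnd ℂ) a2 * x 1 + 2 * x 2 + a3 * x 3 + 0 * x 4 + a4 * x 5) +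
          (starRingEnd ℂ) (x 3) * (0 * x 0 + 0 * x 1 + (starRingEnd ℂ) a3 * x 2 + 2 * x 3 + a5 * x 4 + 0 * x 5) +
          (starRingEnd ℂ) (x 4) * (0 * x 0 + 0 * x 1 + 0 * x 2 + (starRingEnd ℂ) a5 * x 3 + 2 * x 4 + 0 * x 5) +
          (starRingEnd ℂ) (x 5) * (0 * x 0 + 0 * x 1 + (starRingEnd ℂ) a4 * x 2 + 0 * x 3 + 0 * x 4 + 2 * x 5)).re
          = 2*((‖x 0‖)^2 + (‖x 1‖)^2 + (‖x 2‖)^2 +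
              (‖x 3‖)^2 + (‖x 4‖)^2 + (‖x 5‖)^2)
            + 2*((a1 * ((starRingEnd ℂ) (x 0) * x 1)).re + (a2 * ((starRingEnd ℂ) (x 1) * x 2)).re +
                 (a3 * ((starRingEnd ℂ) (x 2) * x 3)).re + (a4 * ((starRingEnd ℂ) (x 2) * x 5)).re +
                 (a5 * ((starRingEnd ℂ) (x 3) * x 4)).re) := by
        simp [Complex.sq_norm, Complex.normSq_apply, Complex.add_re, Complex.add_im,
          Complex.mul_re, Complex.mul_im, Complex.conj_re, Complex.conj_im]
        ring
      rw [hre]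
      have b1 := E6_edge a1 (x 0) (x 1) h1
      have b2 := E6_edge a2 (x 1) (x 2) h2
      have b3 := E6_edge a3 (x 2) (x 3) h3
      have b4 := E6_edge a4 (x 2) (x 5) h4
      have b5 := E6_edge a5 (x 3) (x 4) h5
      obtain ⟨i, hi⟩ := Function.ne_iff.mp hx
      have hpos : 0 < ‖x 0‖ ∨ 0 < ‖x 1‖ ∨ 0 < ‖x 2‖ ∨
          0 < ‖x 3‖ ∨ 0 < ‖x 4‖ ∨ 0 < ‖x 5‖ := by
        simp only [Pi.zero_apply] at hi
        fin_cases i <;>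
          first
          | exact Or.inl (norm_pos_iff.mpr hi)
          | exact Or.inr (Or.inl (norm_pos_iff.mpr hi))
          | exact Or.inr (Or.inr (Or.inl (norm_pos_iff.mpr hi)))
          | exact Or.inr (Or.inr (Or.inr (Or.inl (norm_pos_iff.mpr hi))))
          | exact Or.inr (Or.inr (Or.inr (Or.inr (Or.inl (norm_pos_iff.mpr hi)))))
          | exact Or.inr (Or.inr (Or.inr (Or.inr (Or.inr (norm_pos_iff.mpr hi)))))
      have core := E6_core (‖x 0‖) (‖x 1‖) (‖x 2‖)
        (‖x 3‖) (‖x 4‖) (‖x 5‖) hpos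
      linarith
    · simp [Complex.add_im, Complex.add_re, Complex.mul_im, Complex.mul_re,
        Complex.conj_re, Complex.conj_im]
      ring
end

section
/- Let a₁, …, a₆ be complex numbers, each of modulus strictly less than 1. Let M be the 7×7 Hermitian matrix with all diagonal entries 2, with M_{1,2} = a₁, M_{2,3} = a₂, M_{3,4} = a₃, M_{4,5} = a₄, M_{4,7} = a₅, M_{5,6} = a₆, with the entries below the diagonal given by the complex conjugates (M_{j,i} = conj(M_{i,j})), and all other entries 0. Then M is positive definite. -/
open Matrix
open scoped ComplexOrder

private lemma E7_real_key (c1 c2 c3 c4 c5 c6 t1 t2 t3 t4 t5 t6 t7 : ℝ)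
    (hc1 : 0 ≤ c1) (hc1' : c1 < 1) (hc2 : 0 ≤ c2) (hc2' : c2 < 1)
    (hc3 : 0 ≤ c3) (hc3' : c3 < 1) (hc4 : 0 ≤ c4) (hc4' : c4 < 1)
    (hc5 : 0 ≤ c5) (hc5' : c5 < 1) (hc6 : 0 ≤ c6) (hc6' : c6 < 1)
    (ht1 : 0 ≤ t1) (ht2 : 0 ≤ t2) (ht3 : 0 ≤ t3) (ht4 : 0 ≤ t4)
    (ht5 : 0 ≤ t5) (ht6 : 0 ≤ t6) (ht7 : 0 ≤ t7)
    (hs : 0 < t1^2 + t2^2 + t3^2 + t4^2 + t5^2 + t6^2 + t7^2) :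
    0 < 2*(t1^2 + t2^2 + t3^2 + t4^2 + t5^2 + t6^2 + t7^2)
      - 2*(c1*(t1*t2) + c2*(t2*t3) + c3*(t3*t4) + c4*(t4*t5) + c5*(t4*t7) + c6*(t5*t6)) := by
  set c := max c1 (max c2 (max c3 (max c4 (max c5 c6)))) with hc
  have hcc1 : c1 ≤ c := le_max_left _ _
  have hcc2 : c2 ≤ c := le_trans (le_max_left _ _) (le_max_right _ _)
  have hcc3 : c3 ≤ c := le_trans (le_trans (le_max_left _ _) (le_max_right _ _)) (le_max_right _ _)
  have hcc4 : c4 ≤ c := le_trans (le_trans (le_trans (le_max_left _ _) (le_max_right _ _))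
    (le_max_right _ _)) (le_max_right _ _)
  have hcc5 : c5 ≤ c := le_trans (le_trans (le_trans (le_trans (le_max_left _ _)
    (le_max_right _ _)) (le_max_right _ _)) (le_max_right _ _)) (le_max_right _ _)
  have hcc6 : c6 ≤ c := le_trans (le_trans (le_trans (le_trans (le_max_right _ _)
    (le_max_right _ _)) (le_max_right _ _)) (le_max_right _ _)) (le_max_right _ _)
  have hclt : c < 1 := by
    simp only [hc, max_lt_iff]
    exact ⟨hc1', hc2', hc3', hc4', hc5', hc6'⟩
  have hc0 : 0 ≤ c := le_trans hc1 hcc1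
  nlinarith [mul_nonneg (sub_nonneg.2 hcc1) (mul_nonneg ht1 ht2),
    mul_nonneg (sub_nonneg.2 hcc2) (mul_nonneg ht2 ht3),
    mul_nonneg (sub_nonneg.2 hcc3) (mul_nonneg ht3 ht4),
    mul_nonneg (sub_nonneg.2 hcc4) (mul_nonneg ht4 ht5),
    mul_nonneg (sub_nonneg.2 hcc5) (mul_nonneg ht4 ht7),
    mul_nonneg (sub_nonneg.2 hcc6) (mul_nonneg ht5 ht6),
    mul_nonneg hc0 (sq_nonneg (t1 - t2/2)),
    mul_nonneg hc0 (sq_nonneg (t2 - 2/3*t3)),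
    mul_nonneg hc0 (sq_nonneg (t3 - 3/4*t4)),
    mul_nonneg hc0 (sq_nonneg (t6 - t5/2)),
    mul_nonneg hc0 (sq_nonneg (t5 - 2/3*t4)),
    mul_nonneg hc0 (sq_nonneg (t7 - t4/2)),
    mul_nonneg hc0 (sq_nonneg t4),
    mul_pos (sub_pos.2 hclt) hs]

/-- E₇ case of Lemma 5.3: the Hermitian matrix with diagonal `2`
whose off-diagonal support is the `E₇` Dynkin diagram, with entries of modulus `< 1`
(and conjugate entries below the diagonal), is positive definite. -/
theorem E7_posDef
    (a1 a2 a3 a4 a5 a6 : ℂ)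
    (h1 : ‖a1‖ < 1) (h2 : ‖a2‖ < 1) (h3 : ‖a3‖ < 1)
    (h4 : ‖a4‖ < 1) (h5 : ‖a5‖ < 1) (h6 : ‖a6‖ < 1) :
    (!![2, a1, 0, 0, 0, 0, 0;
        (starRingEnd ℂ) a1, 2, a2, 0, 0, 0, 0;
        0, (starRingEnd ℂ) a2, 2, a3, 0, 0, 0;
        0, 0, (starRingEnd ℂ) a3, 2, a4, 0, a5;
        0, 0, 0, (starRingEnd ℂ) a4, 2, a6, 0;
        0, 0, 0, 0, (starRingEnd ℂ) a6, 2, 0;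
        0, 0, 0, (starRingEnd ℂ) a5, 0, 0, 2] :
      Matrix (Fin 7) (Fin 7) ℂ).PosDef := by
  rw [posDef_iff_dotProduct_mulVec]
  constructor
  · ext i j
    simp only [Matrix.conjTranspose_apply]
    fin_cases i <;> fin_cases j <;>
      first
        | exact map_zero (starRingEnd ℂ)
        | exact Complex.conj_conj _
        | exact map_ofNat (starRingEnd ℂ) 2
        | rfl
  · intro x hx
    have hz : dotProduct (star x) ((!![2, a1, 0, 0, 0, 0, 0;
          (starRingEnd ℂ) a1, 2, a2, 0, 0, 0, 0;
          0, (starRingEnd ℂ) a2, 2, a3, 0, 0, 0;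
          0, 0, (starRingEnd ℂ) a3, 2, a4, 0, a5;
          0, 0, 0, (starRingEnd ℂ) a4, 2, a6, 0;
          0, 0, 0, 0, (starRingEnd ℂ) a6, 2, 0;
          0, 0, 0, (starRingEnd ℂ) a5, 0, 0, 2] :
        Matrix (Fin 7) (Fin 7) ℂ) *ᵥ x) =
      2 * (x 0 * (starRingEnd ℂ) (x 0) + x 1 * (starRingEnd ℂ) (x 1) + x 2 * (starRingEnd ℂ) (x 2)
        + x 3 * (starRingEnd ℂ) (x 3) + x 4 * (starRingEnd ℂ) (x 4) + x 5 * (starRingEnd ℂ) (x 5)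
        + x 6 * (starRingEnd ℂ) (x 6))
      + ((a1 * ((starRingEnd ℂ) (x 0) * x 1)) + (starRingEnd ℂ) (a1 * ((starRingEnd ℂ) (x 0) * x 1)))
      + ((a2 * ((starRingEnd ℂ) (x 1) * x 2)) + (starRingEnd ℂ) (a2 * ((starRingEnd ℂ) (x 1) * x 2)))
      + ((a3 * ((starRingEnd ℂ) (x 2) * x 3)) + (starRingEnd ℂ) (a3 * ((starRingEnd ℂ) (x 2) * x 3)))
      + ((a4 * ((starRingEnd ℂ) (x 3) * x 4)) + (starRingEnd ℂ) (a4 * ((starRingEnd ℂ) (x 3) * x 4)))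
      + ((a5 * ((starRingEnd ℂ) (x 3) * x 6)) + (starRingEnd ℂ) (a5 * ((starRingEnd ℂ) (x 3) * x 6)))
      + ((a6 * ((starRingEnd ℂ) (x 4) * x 5)) + (starRingEnd ℂ) (a6 * ((starRingEnd ℂ) (x 4) * x 5)))
      := by
      simp [dotProduct, mulVec, Fin.sum_univ_succ, Matrix.cons_val_zero, Matrix.cons_val_succ,
        show Fin.succ (2:Fin 3) = (3:Fin 4) from rfl, show Fin.succ (2:Fin 4) = (3:Fin 5) from rfl,
        show Fin.succ (3:Fin 4) = (4:Fin 5) from rfl, show Fin.succ (2:Fin 5) = (3:Fin 6) from rfl,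
        show Fin.succ (3:Fin 5) = (4:Fin 6) from rfl, show Fin.succ (4:Fin 5) = (5:Fin 6) from rfl,
        show Fin.succ (2:Fin 6) = (3:Fin 7) from rfl, show Fin.succ (3:Fin 6) = (4:Fin 7) from rfl,
        show Fin.succ (4:Fin 6) = (5:Fin 7) from rfl, show Fin.succ (5:Fin 6) = (6:Fin 7) from rfl]
      ring
    rw [hz, Complex.mul_conj, Complex.mul_conj, Complex.mul_conj, Complex.mul_conj,
      Complex.mul_conj, Complex.mul_conj, Complex.mul_conj,
      Complex.add_conj, Complex.add_conj, Complex.add_conj, Complex.add_conj,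
      Complex.add_conj, Complex.add_conj]
    have hcast : (2 * ((Complex.normSq (x 0) : ℂ) + (Complex.normSq (x 1) : ℂ)
        + (Complex.normSq (x 2) : ℂ) + (Complex.normSq (x 3) : ℂ) + (Complex.normSq (x 4) : ℂ)
        + (Complex.normSq (x 5) : ℂ) + (Complex.normSq (x 6) : ℂ))
      + ((2 * (a1 * ((starRingEnd ℂ) (x 0) * x 1)).re : ℝ) : ℂ)
      + ((2 * (a2 * ((starRingEnd ℂ) (x 1) * x 2)).re : ℝ) : ℂ)
      + ((2 * (a3 * ((starRingEnd ℂ) (x 2) * x 3)).re : ℝ) : ℂ)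
      + ((2 * (a4 * ((starRingEnd ℂ) (x 3) * x 4)).re : ℝ) : ℂ)
      + ((2 * (a5 * ((starRingEnd ℂ) (x 3) * x 6)).re : ℝ) : ℂ)
      + ((2 * (a6 * ((starRingEnd ℂ) (x 4) * x 5)).re : ℝ) : ℂ)) =
      (((2 * (Complex.normSq (x 0) + Complex.normSq (x 1) + Complex.normSq (x 2)
        + Complex.normSq (x 3) + Complex.normSq (x 4) + Complex.normSq (x 5)
        + Complex.normSq (x 6))
      + 2 * (a1 * ((starRingEnd ℂ) (x 0) * x 1)).re
      + 2 * (a2 * ((starRingEnd ℂ) (x 1) * x 2)).re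
      + 2 * (a3 * ((starRingEnd ℂ) (x 2) * x 3)).re
      + 2 * (a4 * ((starRingEnd ℂ) (x 3) * x 4)).re
      + 2 * (a5 * ((starRingEnd ℂ) (x 3) * x 6)).re
      + 2 * (a6 * ((starRingEnd ℂ) (x 4) * x 5)).re : ℝ)) : ℂ) := by
      push_cast
      ring
    rw [hcast, Complex.zero_lt_real]
    -- Now a purely real inequality.
    have hb1 : -(‖a1‖ * (‖x 0‖ * ‖x 1‖))
        ≤ (a1 * ((starRingEnd ℂ) (x 0) * x 1)).re := by
      have h := neg_le_of_abs_le (Complex.abs_re_le_norm (a1 * ((starRingEnd ℂ) (x 0) * x 1)))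
      simpa [_root_.map_mul, Complex.norm_conj] using h
    have hb2 : -(‖a2‖ * (‖x 1‖ * ‖x 2‖))
        ≤ (a2 * ((starRingEnd ℂ) (x 1) * x 2)).re := by
      have h := neg_le_of_abs_le (Complex.abs_re_le_norm (a2 * ((starRingEnd ℂ) (x 1) * x 2)))
      simpa [_root_.map_mul, Complex.norm_conj] using h
    have hb3 : -(‖a3‖ * (‖x 2‖ * ‖x 3‖))
        ≤ (a3 * ((starRingEnd ℂ) (x 2) * x 3)).re := by
      have h := neg_le_of_abs_le (Complex.abs_re_le_norm (a3 * ((starRingEnd ℂ) (x 2) * x 3)))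
      simpa [_root_.map_mul, Complex.norm_conj] using h
    have hb4 : -(‖a4‖ * (‖x 3‖ * ‖x 4‖))
        ≤ (a4 * ((starRingEnd ℂ) (x 3) * x 4)).re := by
      have h := neg_le_of_abs_le (Complex.abs_re_le_norm (a4 * ((starRingEnd ℂ) (x 3) * x 4)))
      simpa [_root_.map_mul, Complex.norm_conj] using h
    have hb5 : -(‖a5‖ * (‖x 3‖ * ‖x 6‖))
        ≤ (a5 * ((starRingEnd ℂ) (x 3) * x 6)).re := by
      have h := neg_le_of_abs_le (Complex.abs_re_le_norm (a5 * ((starRingEnd ℂ) (x 3) * x 6)))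
      simpa [_root_.map_mul, Complex.norm_conj] using h
    have hb6 : -(‖a6‖ * (‖x 4‖ * ‖x 5‖))
        ≤ (a6 * ((starRingEnd ℂ) (x 4) * x 5)).re := by
      have h := neg_le_of_abs_le (Complex.abs_re_le_norm (a6 * ((starRingEnd ℂ) (x 4) * x 5)))
      simpa [_root_.map_mul, Complex.norm_conj] using h
    have hnsq : ∀ i : Fin 7, Complex.normSq (x i) = ‖x i‖ ^ 2 :=
      fun i => Complex.normSq_eq_norm_sq (x i)
    have hs : 0 < ‖x 0‖ ^ 2 + ‖x 1‖ ^ 2 + ‖x 2‖ ^ 2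
        + ‖x 3‖ ^ 2 + ‖x 4‖ ^ 2 + ‖x 5‖ ^ 2
        + ‖x 6‖ ^ 2 := by
      obtain ⟨i, hi⟩ := Function.ne_iff.mp hx
      have hip : 0 < ‖x i‖ := norm_pos_iff.mpr hi
      have hsum : 0 < ∑ j : Fin 7, ‖x j‖ ^ 2 :=
        Finset.sum_pos' (fun j _ => sq_nonneg _) ⟨i, Finset.mem_univ i, pow_pos hip 2⟩
      rwa [Fin.sum_univ_seven] at hsum
    have hkey := E7_real_key (‖a1‖) (‖a2‖) (‖a3‖)
      (‖a4‖) (‖a5‖) (‖a6‖)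
      (‖x 0‖) (‖x 1‖) (‖x 2‖) (‖x 3‖)
      (‖x 4‖) (‖x 5‖) (‖x 6‖)
      (norm_nonneg a1) h1 (norm_nonneg a2) h2 (norm_nonneg a3) h3
      (norm_nonneg a4) h4 (norm_nonneg a5) h5 (norm_nonneg a6) h6
      (norm_nonneg (x 0)) (norm_nonneg (x 1)) (norm_nonneg (x 2))
      (norm_nonneg (x 3)) (norm_nonneg (x 4)) (norm_nonneg (x 5))
      (norm_nonneg (x 6)) hs
    rw [hnsq 0, hnsq 1, hnsq 2, hnsq 3, hnsq 4, hnsq 5, hnsq 6]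
    linarith [hb1, hb2, hb3, hb4, hb5, hb6, hkey]
end

section
/- Let a₁, …, a₇ be complex numbers, each of modulus strictly less than 1. Let M be the 8×8 Hermitian matrix with all diagonal entries 2, with M_{1,2} = a₁, M_{2,3} = a₂, M_{3,4} = a₃, M_{4,5} = a₄, M_{5,6} = a₅, M_{5,8} = a₆, M_{6,7} = a₇, with the entries below the diagonal given by the complex conjugates (M_{j,i} = conj(M_{i,j})), and all other entries 0. Then M is positive definite. -/
open Matrix
open scoped ComplexOrder

namespace E8Aux

variable {α : Type*} {m : ℕ}

@[simp] lemma vecHead_const (a : α) : vecHead (fun _ : Fin (m + 1) => a) = a := rfl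

@[simp] lemma vecTail_const (a : α) : vecTail (fun _ : Fin (m + 1) => a) = fun _ : Fin m => a := rfl

@[simp] lemma cons_val_five (x : α) (u : Fin (m + 5) → α) :
    vecCons x u 5 = vecHead (vecTail (vecTail (vecTail (vecTail u)))) := rfl

@[simp] lemma cons_val_six (x : α) (u : Fin (m + 6) → α) :
    vecCons x u 6 = vecHead (vecTail (vecTail (vecTail (vecTail (vecTail u))))) := rfl

@[simp] lemma cons_val_seven (x : α) (u : Fin (m + 7) → α) :
    vecCons x u 7 = vecHead (vecTail (vecTail (vecTail (vecTail (vecTail (vecTail u)))))) := rfl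

lemma cartan_lb (y0 y1 y2 y3 y4 y5 y6 y7 : ℝ) :
    (1/100) * (y0^2+y1^2+y2^2+y3^2+y4^2+y5^2+y6^2+y7^2) ≤
      2*(y0^2+y1^2+y2^2+y3^2+y4^2+y5^2+y6^2+y7^2)
        - 2*(y0*y1+y1*y2+y2*y3+y3*y4+y4*y5+y4*y7+y5*y6) := by
  nlinarith [sq_nonneg (y0 - (100/199)*y1),
    sq_nonneg (y1 - (19900/29601)*y2),
    sq_nonneg (y2 - (2960100/3900599)*y3),
    sq_nonneg (y3 - (390059900/480209201)*y4),
    sq_nonneg (y4 - (48020920100/56555640999)*y5 - (48020920100/56555640999)*y7),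
    sq_nonneg (y5 - (5655564099900/6452480548801)*y6 - (4802092010000/6452480548801)*y7),
    sq_nonneg (y6 - (480209201000000/718487219221399)*y7),
    sq_nonneg y7]

lemma edge_re (a y z : ℂ) (ha : ‖a‖ < 1) :
    -(2 * (‖y‖ * ‖z‖)) ≤
      ((starRingEnd ℂ) y * a * z + (starRingEnd ℂ) z * (starRingEnd ℂ) a * y).re := by
  have hw : (starRingEnd ℂ) y * a * z + (starRingEnd ℂ) z * (starRingEnd ℂ) a * y
      = (a * (starRingEnd ℂ) y * z) + (starRingEnd ℂ) (a * (starRingEnd ℂ) y * z) := by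
    simp only [_root_.map_mul, Complex.conj_conj]; ring
  rw [hw, Complex.add_conj]
  have h1 : |(a * (starRingEnd ℂ) y * z).re| ≤ ‖a * (starRingEnd ℂ) y * z‖ :=
    Complex.abs_re_le_norm _
  have h2 : ‖a * (starRingEnd ℂ) y * z‖ ≤ ‖y‖ * ‖z‖ := by
    rw [norm_mul, norm_mul, Complex.norm_conj]
    rw [mul_assoc]
    exact mul_le_of_le_one_left (mul_nonneg (norm_nonneg _) (norm_nonneg _)) ha.le
  have h3 := abs_le.mp h1
  simp only [Complex.ofReal_re]
  linarith [h3.1]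

lemma diag_re (y : ℂ) : ((starRingEnd ℂ) y * 2 * y).re = 2 * ‖y‖ ^ 2 := by
  have h : (starRingEnd ℂ) y * 2 * y = 2 * (y * (starRingEnd ℂ) y) := by ring
  rw [h, Complex.mul_conj]
  simp [Complex.sq_norm]

end E8Aux

open E8Aux

set_option maxHeartbeats 1600000

/-- E₈ case of Lemma 5.3: the Hermitian matrix with diagonal `2`
whose off-diagonal support is the `E₈` Dynkin diagram, with entries of modulus `< 1`
(and conjugate entries below the diagonal), is positive definite. -/
theorem E8_posDef
    (a1 a2 a3 a4 a5 a6 a7 : ℂ)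
    (h1 : ‖a1‖ < 1) (h2 : ‖a2‖ < 1) (h3 : ‖a3‖ < 1)
    (h4 : ‖a4‖ < 1) (h5 : ‖a5‖ < 1) (h6 : ‖a6‖ < 1)
    (h7 : ‖a7‖ < 1) :
    (!![2, a1, 0, 0, 0, 0, 0, 0;
        (starRingEnd ℂ) a1, 2, a2, 0, 0, 0, 0, 0;
        0, (starRingEnd ℂ) a2, 2, a3, 0, 0, 0, 0;
        0, 0, (starRingEnd ℂ) a3, 2, a4, 0, 0, 0;
        0, 0, 0, (starRingEnd ℂ) a4, 2, a5, 0, a6;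
        0, 0, 0, 0, (starRingEnd ℂ) a5, 2, a7, 0;
        0, 0, 0, 0, 0, (starRingEnd ℂ) a7, 2, 0;
        0, 0, 0, 0, (starRingEnd ℂ) a6, 0, 0, 2] :
      Matrix (Fin 8) (Fin 8) ℂ).PosDef := by
  rw [posDef_iff_dotProduct_mulVec]
  constructor
  · ext i j
    fin_cases i <;> fin_cases j <;> simp [Matrix.conjTranspose_apply]
  · intro x hx
    have hS : star x ⬝ᵥ ((!![2, a1, 0, 0, 0, 0, 0, 0;
        (starRingEnd ℂ) a1, 2, a2, 0, 0, 0, 0, 0;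
        0, (starRingEnd ℂ) a2, 2, a3, 0, 0, 0, 0;
        0, 0, (starRingEnd ℂ) a3, 2, a4, 0, 0, 0;
        0, 0, 0, (starRingEnd ℂ) a4, 2, a5, 0, a6;
        0, 0, 0, 0, (starRingEnd ℂ) a5, 2, a7, 0;
        0, 0, 0, 0, 0, (starRingEnd ℂ) a7, 2, 0;
        0, 0, 0, 0, (starRingEnd ℂ) a6, 0, 0, 2] :
      Matrix (Fin 8) (Fin 8) ℂ) *ᵥ x)
        = ((starRingEnd ℂ) (x 0) * 2 * x 0 + (starRingEnd ℂ) (x 1) * 2 * x 1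
            + (starRingEnd ℂ) (x 2) * 2 * x 2 + (starRingEnd ℂ) (x 3) * 2 * x 3
            + (starRingEnd ℂ) (x 4) * 2 * x 4 + (starRingEnd ℂ) (x 5) * 2 * x 5
            + (starRingEnd ℂ) (x 6) * 2 * x 6 + (starRingEnd ℂ) (x 7) * 2 * x 7)
          + ((starRingEnd ℂ) (x 0) * a1 * x 1 + (starRingEnd ℂ) (x 1) * (starRingEnd ℂ) a1 * x 0)
          + ((starRingEnd ℂ) (x 1) * a2 * x 2 + (starRingEnd ℂ) (x 2) * (starRingEnd ℂ) a2 * x 1)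
          + ((starRingEnd ℂ) (x 2) * a3 * x 3 + (starRingEnd ℂ) (x 3) * (starRingEnd ℂ) a3 * x 2)
          + ((starRingEnd ℂ) (x 3) * a4 * x 4 + (starRingEnd ℂ) (x 4) * (starRingEnd ℂ) a4 * x 3)
          + ((starRingEnd ℂ) (x 4) * a5 * x 5 + (starRingEnd ℂ) (x 5) * (starRingEnd ℂ) a5 * x 4)
          + ((starRingEnd ℂ) (x 4) * a6 * x 7 + (starRingEnd ℂ) (x 7) * (starRingEnd ℂ) a6 * x 4)
          + ((starRingEnd ℂ) (x 5) * a7 * x 6 + (starRingEnd ℂ) (x 6) * (starRingEnd ℂ) a7 * x 5) := by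
      simp [dotProduct, Matrix.mulVec, Fin.sum_univ_eight]
      ring
    obtain ⟨k, hk⟩ : ∃ k, x k ≠ 0 := Function.ne_iff.mp hx
    have hpos : 0 < ∑ i, ‖x i‖ ^ 2 := by
      refine Finset.sum_pos' (fun i _ => by positivity) ⟨k, Finset.mem_univ k, ?_⟩
      have : 0 < ‖x k‖ := norm_pos_iff.mpr hk
      positivity
    rw [Fin.sum_univ_eight] at hpos
    rw [Complex.lt_def]
    constructor
    · rw [hS]
      simp only [Complex.add_re, Complex.zero_re]
      rw [diag_re, diag_re, diag_re, diag_re, diag_re, diag_re, diag_re, diag_re]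
      have e1 := edge_re a1 (x 0) (x 1) h1
      have e2 := edge_re a2 (x 1) (x 2) h2
      have e3 := edge_re a3 (x 2) (x 3) h3
      have e4 := edge_re a4 (x 3) (x 4) h4
      have e5 := edge_re a5 (x 4) (x 5) h5
      have e6 := edge_re a6 (x 4) (x 7) h6
      have e7 := edge_re a7 (x 5) (x 6) h7
      simp only [Complex.add_re] at e1 e2 e3 e4 e5 e6 e7
      have key := cartan_lb (‖x 0‖) (‖x 1‖) (‖x 2‖)
        (‖x 3‖) (‖x 4‖) (‖x 5‖) (‖x 6‖)
        (‖x 7‖)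
      linarith
    · rw [hS]
      simp only [Complex.add_im, Complex.mul_im, Complex.mul_re, Complex.zero_im,
        Complex.conj_re, Complex.conj_im, Complex.re_ofNat, Complex.im_ofNat]
      ring
end

section
/- Let n ≥ 2, let u₁, …, uₙ be complex numbers, let δ ∈ (0, π), and suppose Re((u_j − u_{j+1})·e^{−iδ/2}) > 0 for all j = 1, …, n−1. Let x > 0, r > 0, and μ = r·e^{i(−π + δ/2)}. Define dⱼ = μ⁻¹·x·uⱼ + μ·x·conj(uⱼ) for j = 1, …, n, let E = diag(e^{d₁}, …, e^{dₙ}), let S_{Aₙ} be the n×n upper unitriangular matrix with all diagonal entries 1, all superdiagonal entries −1, and zeros elsewhere, and set G₋ = E·S_{Aₙ}·E⁻¹. Then the Hermitian matrix G₋ + (G₋)* (where * denotes conjugate transpose) is positive definite. -/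
open Matrix Complex Real
open scoped ComplexOrder

/-- explicit `Aₙ` jump-matrix positivity: for `μ` on the contour
ray `arg μ = -π + δ/2`, with `Re((u_j - u_{j+1}) e^{-iδ/2}) > 0` for consecutive
indices, the Hermitian matrix `G₋ + G₋ᴴ` built from the Stokes matrix `S_{Aₙ}` is
positive definite. -/
theorem An_jump_matrix_posDef
    (n : ℕ) (hn : 2 ≤ n) (u : Fin n → ℂ) (δ : ℝ) (hδ : δ ∈ Set.Ioo 0 π)
    (hord : ∀ (j : Fin n) (h : (j : ℕ) + 1 < n),
      0 < ((u j - u ⟨(j : ℕ) + 1, h⟩) * Complex.exp (-(δ / 2 : ℝ) * Complex.I)).re)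
    (x : ℝ) (hx : 0 < x) (r : ℝ) (hr : 0 < r)
    (μ : ℂ) (hμ : μ = (r : ℂ) * Complex.exp (((-π + δ / 2 : ℝ) : ℂ) * Complex.I))
    (d : Fin n → ℂ)
    (hd : ∀ j, d j = μ⁻¹ * (x : ℂ) * u j + μ * (x : ℂ) * (starRingEnd ℂ) (u j))
    (E : Matrix (Fin n) (Fin n) ℂ) (hE : E = Matrix.diagonal fun j => Complex.exp (d j))
    (S : Matrix (Fin n) (Fin n) ℂ)
    (hS : S = Matrix.of fun i j : Fin n =>
      if i = j then (1 : ℂ) else if (j : ℕ) = (i : ℕ) + 1 then -1 else 0)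
    (G : Matrix (Fin n) (Fin n) ℂ) (hG : G = E * S * E⁻¹) :
    (G + Gᴴ).PosDef := by
  haveI : NeZero n := ⟨by omega⟩
  have hval : ∀ (i : Fin n), (i:ℕ)+1 < n → ((i+1 : Fin n) : ℕ) = (i:ℕ)+1 := by
    intro i h
    rw [Fin.add_def, Fin.val_one']
    show ((i:ℕ) + 1 % n) % n = (i:ℕ) + 1
    rw [Nat.mod_eq_of_lt (show 1 < n by omega), Nat.mod_eq_of_lt h]
  have hsucc : ∀ (i : Fin n) (h : (i:ℕ)+1 < n), (⟨(i:ℕ)+1, h⟩ : Fin n) = i + 1 := by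
    intro i h; ext; rw [hval i h]
  -- real part of d differences is negative
  have hre : ∀ (i : Fin n), (i:ℕ)+1 < n → (d i - d (i+1)).re < 0 := by
    intro i h
    have hw := hord i h
    set w : ℂ := u i - u ⟨(i:ℕ)+1, h⟩ with hwdef
    have hdd : d i - d (i+1) = (x:ℂ) * (μ⁻¹ * w + μ * (starRingEnd ℂ) w) := by
      rw [← hsucc i h, hd i, hd ⟨(i:ℕ)+1, h⟩, hwdef, _root_.map_sub]; ring
    set E1 : ℂ := Complex.exp ((↑(π - δ/2) : ℂ) * Complex.I) with hE1def
    have hμinv : μ⁻¹ = (r:ℂ)⁻¹ * E1 := by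
      rw [hμ, mul_inv, ← Complex.exp_neg, hE1def]
      congr 2
      push_cast; ring
    have hconjE1 : (starRingEnd ℂ) E1 = Complex.exp (((-π + δ / 2 : ℝ) : ℂ) * Complex.I) := by
      rw [hE1def, ← Complex.exp_conj, _root_.map_mul, Complex.conj_I, Complex.conj_ofReal]
      congr 1
      push_cast; ring
    have hμc : μ = (r:ℂ) * (starRingEnd ℂ) E1 := by rw [hμ, hconjE1]
    have hsplit : μ⁻¹ * w + μ * (starRingEnd ℂ) w
        = (↑(r⁻¹) : ℂ) * (E1 * w) + (r:ℂ) * (starRingEnd ℂ) (E1 * w) := by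
      rw [hμinv, hμc, _root_.map_mul]
      push_cast
      ring
    have hsre : (E1 * w).re < 0 := by
      have hEw : E1 * w = -(w * Complex.exp (-(δ/2:ℝ) * Complex.I)) := by
        rw [hE1def]
        have h2 : (↑(π - δ/2) : ℂ) * Complex.I
            = ↑π * Complex.I + (-(δ/2:ℝ) : ℂ) * Complex.I := by push_cast; ring
        rw [h2, Complex.exp_add, Complex.exp_pi_mul_I]; ring
      rw [hEw]
      simpa using hw
    have hcast : (d i - d (i+1)).re = x * ((r⁻¹ + r) * (E1 * w).re) := by
      rw [hdd, hsplit]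
      simp only [Complex.re_ofReal_mul, Complex.add_re, Complex.conj_re]
      ring
    rw [hcast]
    have hx' : 0 < r⁻¹ + r := by positivity
    exact mul_neg_of_pos_of_neg hx (mul_neg_of_pos_of_neg hx' hsre)
  -- the superdiagonal entries
  set a : Fin n → ℂ := fun i => if (i:ℕ)+1 < n then Complex.exp (d i - d (i+1)) else 0 with hadef
  have ha_lt : ∀ i, ‖a i‖ < 1 := by
    intro i
    rw [hadef]
    by_cases h : (i:ℕ)+1 < n
    · simp only [if_pos h]
      rw [Complex.norm_exp, Real.exp_lt_one_iff]
      exact hre i h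
    · simp [if_neg h]
  -- E⁻¹ and entries of G
  have hEinv : E⁻¹ = Matrix.diagonal fun j => Complex.exp (-(d j)) := by
    apply Matrix.inv_eq_right_inv
    rw [hE, Matrix.diagonal_mul_diagonal]
    simp [← Complex.exp_add]
  have hGapply : ∀ i j, G i j = Complex.exp (d i) * (S i j * Complex.exp (-(d j))) := by
    intro i j
    rw [hG, hEinv, hE, Matrix.mul_diagonal, Matrix.diagonal_mul, mul_assoc]
  have hSsum : ∀ (i : Fin n) (f : Fin n → ℂ),
      ∑ j, S i j * f j = f i - (if (i:ℕ)+1 < n then f (i+1) else 0) := by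
    intro i f
    have hsplit : ∀ j, S i j * f j
        = (if i = j then f j else 0) - (if (j:ℕ) = (i:ℕ)+1 then f j else 0) := by
      intro j
      rw [hS]
      simp only [Matrix.of_apply]
      by_cases h1 : i = j
      · have h2 : ¬ ((j:ℕ) = (i:ℕ)+1) := by subst h1; omega
        simp [h1, h2]
      · by_cases h2 : (j:ℕ) = (i:ℕ)+1
        · simp [h1, h2]
        · simp [h1, h2]
    rw [Finset.sum_congr rfl (fun j _ => hsplit j), Finset.sum_sub_distrib]
    congr 1
    · simp
    · by_cases h : (i:ℕ)+1 < n
      · rw [if_pos h, Finset.sum_eq_single (i+1)]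
        · rw [if_pos (hval i h)]
        · intro j _ hj
          rw [if_neg]
          intro hc
          exact hj (by ext; rw [hc, hval i h])
        · simp
      · rw [if_neg h]
        apply Finset.sum_eq_zero
        intro j _
        rw [if_neg]
        intro hc
        exact h (hc ▸ j.isLt)
  rw [Matrix.posDef_iff_dotProduct_mulVec]
  constructor
  · exact Matrix.isHermitian_add_transpose_self G
  intro v hv
  set b : Fin n → ℂ := fun i => if (i:ℕ)+1 < n then v (i+1) else 0 with hbdef
  set z : Fin n → ℂ := fun i => a i * (starRingEnd ℂ) (v i) * b i with hzdef
  have hGv : ∀ i, (G *ᵥ v) i = v i - a i * b i := by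
    intro i
    have h1 : (G *ᵥ v) i = Complex.exp (d i) * ∑ j, S i j * (Complex.exp (-(d j)) * v j) := by
      simp only [Matrix.mulVec, dotProduct, Finset.mul_sum]
      apply Finset.sum_congr rfl
      intro j _
      rw [hGapply]; ring
    rw [h1, hSsum i (fun j => Complex.exp (-(d j)) * v j), mul_sub]
    congr 1
    · rw [← mul_assoc, ← Complex.exp_add]; simp
    · rw [hadef, hbdef]
      by_cases h : (i:ℕ)+1 < n
      · simp only [if_pos h]
        rw [← mul_assoc, ← Complex.exp_add, ← sub_eq_add_neg]
      · simp [if_neg h]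
  have hQG : star v ⬝ᵥ (G *ᵥ v) = ∑ i, (((Complex.normSq (v i)) : ℂ) - z i) := by
    simp only [dotProduct, Pi.star_apply, Complex.star_def]
    apply Finset.sum_congr rfl
    intro i _
    rw [hGv i, hzdef, mul_sub]
    congr 1
    · rw [mul_comm, Complex.mul_conj]
    · ring
  have hQH : star v ⬝ᵥ (Gᴴ *ᵥ v) = (starRingEnd ℂ) (star v ⬝ᵥ (G *ᵥ v)) := by
    simp only [dotProduct, Matrix.mulVec, Matrix.conjTranspose_apply, Pi.star_apply,
      Complex.star_def, _root_.map_sum, _root_.map_mul, Finset.mul_sum, Complex.conj_conj]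
    rw [Finset.sum_comm]
    apply Finset.sum_congr rfl; intro i _
    apply Finset.sum_congr rfl; intro j _
    ring
  have key : star v ⬝ᵥ ((G + Gᴴ) *ᵥ v)
      = ((∑ i, (2 * Complex.normSq (v i) - 2 * (z i).re) : ℝ) : ℂ) := by
    rw [Matrix.add_mulVec, dotProduct_add, hQH, hQG, _root_.map_sum, ← Finset.sum_add_distrib]
    push_cast
    apply Finset.sum_congr rfl
    intro i _
    rw [_root_.map_sub, Complex.conj_ofReal]
    have h := Complex.add_conj (z i)
    push_cast at h
    simp only [hzdef] at h ⊢
    linear_combination -h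
  rw [key]
  rw [Complex.zero_lt_real]
  -- real positivity
  have habs : ∀ w : ℂ, Complex.normSq w = ‖w‖^2 := fun w => (Complex.sq_norm w).symm
  set Sv := ∑ i, (‖v i‖)^2 with hSvdef
  have hSvpos : 0 < Sv := by
    obtain ⟨k, hk⟩ : ∃ k, v k ≠ 0 := by
      by_contra hc
      push_neg at hc
      exact hv (funext hc)
    apply Finset.sum_pos' (fun i _ => by positivity)
    exact ⟨k, Finset.mem_univ k, pow_pos (norm_pos_iff.mpr hk) 2⟩
  have hune : (Finset.univ : Finset (Fin n)).Nonempty := Finset.univ_nonempty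
  set cmax := Finset.univ.sup' hune (fun i => ‖a i‖) with hcdef
  have hcmax_lt : cmax < 1 := (Finset.sup'_lt_iff hune).mpr (fun i _ => ha_lt i)
  have hcmax_nonneg : 0 ≤ cmax := by
    have h0 := Finset.le_sup' (fun i => ‖a i‖) (Finset.mem_univ (⟨0, by omega⟩ : Fin n))
    exact le_trans (norm_nonneg _) h0
  have hterm : ∀ i, 2 * (z i).re ≤ cmax * ((‖v i‖)^2 + (‖b i‖)^2) := by
    intro i
    have h1 : (z i).re ≤ ‖z i‖ := Complex.re_le_norm _
    have h2 : ‖z i‖ = ‖a i‖ * (‖v i‖ * ‖b i‖) := by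
      rw [hzdef]
      simp only [norm_mul, Complex.norm_conj]
      ring
    have h3 : ‖a i‖ ≤ cmax :=
      Finset.le_sup' (fun i => ‖a i‖) (Finset.mem_univ i)
    nlinarith [norm_nonneg (v i), norm_nonneg (b i), norm_nonneg (a i),
      sq_nonneg (‖v i‖ - ‖b i‖)]
  have hSb : ∑ i, (‖b i‖)^2 ≤ Sv := by
    have heach : ∀ i ∈ (Finset.univ : Finset (Fin n)),
        (‖b i‖)^2 ≤ (‖v (i+1)‖)^2 := by
      intro i _
      rw [hbdef]
      by_cases h : (i:ℕ)+1 < n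
      · simp [if_pos h]
      · simp only [if_neg h, map_zero]
        simpa using sq_nonneg (‖v (i+1)‖)
    calc ∑ i, (‖b i‖)^2 ≤ ∑ i, (‖v (i+1)‖)^2 := Finset.sum_le_sum heach
      _ = Sv := Fintype.sum_equiv (Equiv.addRight (1 : Fin n)) _ _ (fun i => rfl)
  have hSbnn : 0 ≤ ∑ i, (‖b i‖)^2 := Finset.sum_nonneg (fun i _ => by positivity)
  have hsum_z : ∑ i, 2 * (z i).re ≤ cmax * (Sv + ∑ i, (‖b i‖)^2) := by
    calc ∑ i, 2 * (z i).re
        ≤ ∑ i, cmax * ((‖v i‖)^2 + (‖b i‖)^2) :=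
          Finset.sum_le_sum (fun i _ => hterm i)
      _ = cmax * (Sv + ∑ i, (‖b i‖)^2) := by
          rw [← Finset.mul_sum, Finset.sum_add_distrib]
  have hsplitsum : ∑ i, (2 * Complex.normSq (v i) - 2 * (z i).re)
      = 2 * Sv - ∑ i, 2 * (z i).re := by
    rw [Finset.sum_sub_distrib, hSvdef, Finset.mul_sum]
    congr 1
    apply Finset.sum_congr rfl
    intro i _
    rw [habs]
  rw [hsplitsum]
  have h4 : cmax * (∑ i, (‖b i‖)^2) ≤ cmax * Sv :=
    mul_le_mul_of_nonneg_left hSb hcmax_nonneg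
  have h5 : cmax * Sv < 1 * Sv := mul_lt_mul_of_pos_right hcmax_lt hSvpos
  linarith
end
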